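/- arXiv:1601.02218 — 4 statements merged into one kernel-verified Lean document; each statement's English description precedes it below -/
import Mathlib

section
/- Let H be a real Hilbert space, C ⊆ H nonempty closed convex. Suppose each A_i : C → H (i = 1,…,N) is α-inverse strongly monotone, each S_j (j = 1,…,M) is asymptotically κ-strictly pseudocontractive with sequence {k_n} ⊆ [1,∞), k_n → 1, the parameters satisfy 0 < α_n < 1 with limsup α_n < 1, κ ≤ β_n ≤ b < 1, 0 < d ≤ r_n ≤ e < 2α, and F = (∩_{i=1}^N VI(A_i,C)) ∩ (∩_{j=1}^M F(S_j)) is nonempty and bounded with F ⊆ {v : ‖v‖ ≤ ω}. Let x_0 ∈ C, C_0 = C, and for n ≥ 0: y_n^i = P_C(x_n − r_n A_i x_n); i_n maximizes ‖y_n^i − x_n‖ and ȳ_n = y_n^{i_n}; z_n^j = α_n x_n + (1−α_n)(β_n ȳ_n + (1−β_n) S_j^n ȳ_n); j_n maximizes ‖z_n^j − x_n‖ and z̄_n = z_n^{j_n}; C_{n+1} = {v ∈ C_n : ‖z̄_n − v‖² ≤ ‖x_n − v‖² + ε_n} with ε_n = (k_n − 1)(‖x_n‖ + ω)²; x_{n+1}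 = P_{C_{n+1}} x_0. Then {x_n} converges strongly to P_F x_0. -/
open scoped RealInnerProductSpace
open Filter Topology

/-- `p` is the metric projection of `x` onto `K`. -/
def IsProjOn {H : Type*} [NormedAddCommGroup H] (K : Set H) (x p : H) : Prop :=
  p ∈ K ∧ ∀ v ∈ K, ‖p - x‖ ≤ ‖v - x‖

section Helpers

variable {H : Type*} [NormedAddCommGroup H] [InnerProductSpace ℝ H]

lemma isProjOn_inner_nonpos {K : Set H} (hK : Convex ℝ K) {x p : H}
    (h : IsProjOn K x p) : ∀ v ∈ K, ⟪x - p, v - p⟫ ≤ 0 := by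
  intro v hv
  obtain ⟨hpK, hmin⟩ := h
  by_cases hvp : v = p
  · simp [hvp]
  have hnorm : 0 < ‖v - p‖ := by
    rw [norm_pos_iff]; exact sub_ne_zero.mpr hvp
  have hn2 : 0 < ‖v - p‖ ^ 2 := by positivity
  refine le_of_forall_pos_le_add ?_
  intro ε hε
  set t : ℝ := min 1 (2 * ε / ‖v - p‖ ^ 2) with ht
  have ht0 : 0 < t := lt_min one_pos (by positivity)
  have ht1 : t ≤ 1 := min_le_left _ _
  have hmem : p + t • (v - p) ∈ K := by
    have h' := hK hpK hv (by linarith : (0:ℝ) ≤ 1 - t) ht0.le (by ring)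
    have he : (1 - t) • p + t • v = p + t • (v - p) := by module
    rwa [he] at h'
  have h2 := hmin _ hmem
  have he2 : (p + t • (v - p)) - x = (p - x) + t • (v - p) := by abel
  rw [he2] at h2
  have h3 : ‖p - x‖ ^ 2 ≤ ‖(p - x) + t • (v - p)‖ ^ 2 := by
    have := norm_nonneg ((p - x) + t • (v - p))
    nlinarith [norm_nonneg (p - x)]
  rw [norm_add_sq_real, real_inner_smul_right, norm_smul, Real.norm_eq_abs] at h3
  have h4 : 0 ≤ 2 * (t * ⟪p - x, v - p⟫) + t ^ 2 * ‖v - p‖ ^ 2 := by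
    nlinarith [sq_abs t]
  have h5 : t * ‖v - p‖ ^ 2 ≤ 2 * ε := by
    calc t * ‖v - p‖ ^ 2 ≤ (2 * ε / ‖v - p‖ ^ 2) * ‖v - p‖ ^ 2 :=
          mul_le_mul_of_nonneg_right (min_le_right _ _) hn2.le
      _ = 2 * ε := by field_simp
  have h6 : ⟪x - p, v - p⟫ = -⟪p - x, v - p⟫ := by
    rw [← inner_neg_left, neg_sub]
  nlinarith

lemma isProjOn_of_inner_nonpos {K : Set H} {x p : H} (hp : p ∈ K)
    (h : ∀ v ∈ K, ⟪x - p, v - p⟫ ≤ 0) : IsProjOn K x p := by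
  refine ⟨hp, fun v hv => ?_⟩
  have h1 := h v hv
  have he : v - x = (p - x) + (v - p) := by abel
  have h2 : ‖p - x‖ ^ 2 ≤ ‖v - x‖ ^ 2 := by
    rw [he, norm_add_sq_real]
    have h3 : ⟪p - x, v - p⟫ = -⟪x - p, v - p⟫ := by rw [← inner_neg_left, neg_sub]
    nlinarith [sq_nonneg ‖v - p‖]
  nlinarith [norm_nonneg (p - x), norm_nonneg (v - x)]

lemma firm_ineq {K : Set H} {u v p q : H}
    (h1 : ∀ w ∈ K, ⟪u - p, w - p⟫ ≤ 0) (h2 : ∀ w ∈ K, ⟪v - q, w - q⟫ ≤ 0)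
    (hp : p ∈ K) (hq : q ∈ K) :
    ‖p - q‖ ^ 2 ≤ ‖u - v‖ ^ 2 - ‖(u - v) - (p - q)‖ ^ 2 := by
  have ha := h1 q hq
  have hb := h2 p hp
  have hqp : q - p = -(p - q) := by abel
  rw [hqp, inner_neg_right] at ha
  have key : ‖p - q‖ ^ 2 ≤ ⟪u - v, p - q⟫ := by
    have e1 : ⟪(v - q) - (u - p), p - q⟫ ≤ 0 := by
      rw [inner_sub_left]; linarith
    have e2 : (v - q) - (u - p) = (v - u) + (p - q) := by abel
    rw [e2, inner_add_left, real_inner_self_eq_norm_sq] at e1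
    have e3 : ⟪v - u, p - q⟫ = -⟪u - v, p - q⟫ := by rw [← inner_neg_left, neg_sub]
    linarith
  have hexp : ‖(u - v) - (p - q)‖ ^ 2
      = ‖u - v‖ ^ 2 - 2 * ⟪u - v, p - q⟫ + ‖p - q‖ ^ 2 := norm_sub_sq_real _ _
  linarith

lemma combo_sq_eq (t : ℝ) (u w : H) :
    ‖t • u + (1 - t) • w‖ ^ 2
      = t * ‖u‖ ^ 2 + (1 - t) * ‖w‖ ^ 2 - t * (1 - t) * ‖u - w‖ ^ 2 := by
  rw [norm_add_sq_real, real_inner_smul_left, real_inner_smul_right,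
    norm_smul, norm_smul, norm_sub_sq_real, Real.norm_eq_abs, Real.norm_eq_abs]
  nlinarith [sq_abs t, sq_abs (1 - t)]

lemma lip_of_quad {κ c s kk L : ℝ} (hκ1 : κ < 1)
    (hs : 0 ≤ s)
    (hquad : 2 * κ * L + (kk + κ) ≤ (1 - κ) * L ^ 2) (hL1 : 1 ≤ L)
    (hslope : κ ≤ (1 - κ) * L)
    (hineq : c ^ 2 ≤ kk * s ^ 2 + κ * (s + c) ^ 2) : c ≤ L * s := by
  by_contra hcon
  push_neg at hcon
  have hLs : 0 ≤ L * s := by positivity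
  have h1 : 0 < c - L * s := by linarith
  have h2 : 0 < (1 - κ) * (c + L * s) - 2 * κ * s := by
    nlinarith [mul_pos (show (0:ℝ) < 1 - κ by linarith) h1,
      mul_nonneg hs (sub_nonneg.mpr hslope)]
  nlinarith [mul_pos h1 h2, mul_nonneg (mul_nonneg hs hs) (sub_nonneg.mpr hquad)]

lemma tendsto_of_sq {f : ℕ → ℝ} (h0 : ∀ n, 0 ≤ f n)
    (h : Filter.Tendsto (fun n => f n ^ 2) Filter.atTop (nhds 0)) :
    Filter.Tendsto f Filter.atTop (nhds 0) := by
  have hcomp := (Real.continuous_sqrt.tendsto 0).comp h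
  simp only [Real.sqrt_zero] at hcomp
  refine Filter.Tendsto.congr (fun n => ?_) hcomp
  exact Real.sqrt_sq (h0 n)

end Helpers

set_option maxHeartbeats 2000000 in
/-- **Corollary 3.2.** Parallel hybrid algorithm for a finite family of
variational inequalities and asymptotically κ-strictly pseudocontractive mappings:
`{xₙ}` converges strongly to `P_F x₀`. -/
theorem corollary32_strong_convergence
    {H : Type*} [NormedAddCommGroup H] [InnerProductSpace ℝ H] [CompleteSpace H]
    (C : Set H) (hCne : C.Nonempty) (hCcl : IsClosed C) (hCcv : Convex ℝ C)
    (N M : ℕ) (hN : 0 < N) (hM : 0 < M)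
    -- the operators Aᵢ are α-inverse strongly monotone on C
    (A : Fin N → H → H) (α : ℝ) (hα : 0 < α)
    (hism : ∀ i, ∀ x ∈ C, ∀ y ∈ C, α * ‖A i x - A i y‖ ^ 2 ≤ ⟪A i x - A i y, x - y⟫)
    -- the mappings Sⱼ : C → C are asymptotically κ-strictly pseudocontractive with
    -- the same sequence {kₙ} ⊆ [1,∞), kₙ → 1
    (S : Fin M → H → H) (hS : ∀ j, Set.MapsTo (S j) C C)
    (κ : ℝ) (hκ0 : 0 ≤ κ) (hκ1 : κ < 1)
    (k : ℕ → ℝ) (hk1 : ∀ n, 1 ≤ k n)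
    (hklim : Filter.Tendsto k Filter.atTop (nhds 1))
    (hasym : ∀ j, ∀ n, 1 ≤ n → ∀ x ∈ C, ∀ y ∈ C,
      ‖(S j)^[n] x - (S j)^[n] y‖ ^ 2
        ≤ k n * ‖x - y‖ ^ 2 + κ * ‖(x - (S j)^[n] x) - (y - (S j)^[n] y)‖ ^ 2)
    -- the solution set F = (∩ᵢ VI(Aᵢ,C)) ∩ (∩ⱼ F(Sⱼ)) is nonempty and bounded by ω
    (F : Set H)
    (hF : F = {v ∈ C | ∀ i, ∀ y ∈ C, 0 ≤ ⟪A i v, y - v⟫} ∩ {v | ∀ j, S j v = v})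
    (hFne : F.Nonempty) (ω : ℝ) (hω : 0 < ω) (hFb : ∀ v ∈ F, ‖v‖ ≤ ω)
    -- control parameters
    (a : ℕ → ℝ) (ha0 : ∀ n, 0 < a n) (ha1 : ∀ n, a n < 1)
    (halimsup : Filter.limsup a Filter.atTop < 1)
    (β : ℕ → ℝ) (b : ℝ) (hbκ : κ < b) (hb1 : b < 1) (hβ : ∀ n, κ ≤ β n ∧ β n ≤ b)
    (r : ℕ → ℝ) (d e : ℝ) (hd : 0 < d) (he : e < 2 * α) (hr : ∀ n, d ≤ r n ∧ r n ≤ e)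
    -- the iterates of Algorithm 1
    (x : ℕ → H) (y : ℕ → Fin N → H) (z : ℕ → Fin M → H)
    (iN : ℕ → Fin N) (jM : ℕ → Fin M) (ybar zbar : ℕ → H) (Cset : ℕ → Set H)
    (hx0 : x 0 ∈ C) (hC0 : Cset 0 = C)
    -- (i) yₙⁱ = P_C (xₙ - rₙ Aᵢ xₙ)
    (hy : ∀ n i, IsProjOn C (x n - r n • A i (x n)) (y n i))
    -- (ii) iₙ maximizes ‖yₙⁱ - xₙ‖ and ȳₙ = yₙ^{iₙ}
    (hiN : ∀ n i, ‖y n i - x n‖ ≤ ‖y n (iN n) - x n‖)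
    (hybar : ∀ n, ybar n = y n (iN n))
    -- (iii) zₙʲ = αₙ xₙ + (1-αₙ)(βₙ ȳₙ + (1-βₙ) Sⱼⁿ ȳₙ)
    (hz : ∀ n j, z n j = a n • x n +
      (1 - a n) • (β n • ybar n + (1 - β n) • (S j)^[n] (ybar n)))
    -- (iv) jₙ maximizes ‖zₙʲ - xₙ‖ and z̄ₙ = zₙ^{jₙ}
    (hjM : ∀ n j, ‖z n j - x n‖ ≤ ‖z n (jM n) - x n‖)
    (hzbar : ∀ n, zbar n = z n (jM n))
    -- (v) Cₙ₊₁ = {v ∈ Cₙ : ‖z̄ₙ - v‖² ≤ ‖xₙ - v‖² + εₙ}, εₙ = (kₙ - 1)(‖xₙ‖ + ω)²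
    (hCset : ∀ n, Cset (n + 1) =
      {v ∈ Cset n | ‖zbar n - v‖ ^ 2 ≤ ‖x n - v‖ ^ 2 + (k n - 1) * (‖x n‖ + ω) ^ 2})
    -- (vi) xₙ₊₁ = P_{Cₙ₊₁} x₀
    (hxproj : ∀ n, IsProjOn (Cset (n + 1)) (x 0) (x (n + 1))) :
    ∃ p, IsProjOn F (x 0) p ∧ Filter.Tendsto x Filter.atTop (nhds p) := by
  -- facts about F
  have hFC : ∀ v ∈ F, v ∈ C := by intro v hv; rw [hF] at hv; exact hv.1.1
  have hFVI : ∀ v ∈ F, ∀ i, ∀ w ∈ C, 0 ≤ ⟪A i v, w - v⟫ := by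
    intro v hv; rw [hF] at hv; exact hv.1.2
  have hFfix : ∀ v ∈ F, ∀ j, S j v = v := by
    intro v hv; rw [hF] at hv; exact hv.2
  have hr0 : ∀ n, 0 < r n := fun n => lt_of_lt_of_le hd (hr n).1
  have hde : 0 < d * (2 * α - e) := by
    have : 0 < 2 * α - e := by linarith
    positivity
  -- basic properties of Cset
  have hCanti : ∀ n, Cset (n + 1) ⊆ Cset n := by
    intro n v hv; rw [hCset n] at hv; exact hv.1
  have hCmono : ∀ m n, n ≤ m → Cset m ⊆ Cset n := by
    intro m n h
    induction m with
    | zero => rw [Nat.le_zero.mp h]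
    | succ m ih =>
      rcases Nat.lt_or_ge n (m+1) with h' | h'
      · exact (hCanti m).trans (ih (Nat.lt_succ_iff.mp h'))
      · rw [Nat.le_antisymm h h']
  have hCsubC : ∀ n, Cset n ⊆ C := fun n => hC0 ▸ hCmono n 0 (Nat.zero_le n)
  have hCclosed : ∀ n, IsClosed (Cset n) := by
    intro n
    induction n with
    | zero => rwa [hC0]
    | succ n ih =>
      rw [hCset n]
      have : {v ∈ Cset n | ‖zbar n - v‖ ^ 2 ≤ ‖x n - v‖ ^ 2 + (k n - 1) * (‖x n‖ + ω) ^ 2}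
          = Cset n ∩ {v | ‖zbar n - v‖ ^ 2 ≤ ‖x n - v‖ ^ 2 + (k n - 1) * (‖x n‖ + ω) ^ 2} := rfl
      rw [this]
      refine ih.inter (isClosed_le ?_ ?_)
      · exact ((continuous_const.sub continuous_id).norm.pow 2)
      · exact (((continuous_const.sub continuous_id).norm.pow 2).add continuous_const)
  have hhalf : ∀ (zv xv : H) (ε : ℝ),
      {v : H | ‖zv - v‖ ^ 2 ≤ ‖xv - v‖ ^ 2 + ε}
        = {v : H | ⟪xv - zv, v⟫ ≤ (‖xv‖ ^ 2 - ‖zv‖ ^ 2 + ε) / 2} := by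
    intro zv xv ε
    ext v
    simp only [Set.mem_setOf_eq]
    rw [norm_sub_sq_real, norm_sub_sq_real, inner_sub_left]
    constructor <;> intro h <;> nlinarith
  have hCconvex : ∀ n, Convex ℝ (Cset n) := by
    intro n
    induction n with
    | zero => rwa [hC0]
    | succ n ih =>
      rw [hCset n]
      have : {v ∈ Cset n | ‖zbar n - v‖ ^ 2 ≤ ‖x n - v‖ ^ 2 + (k n - 1) * (‖x n‖ + ω) ^ 2}
          = Cset n ∩ {v | ‖zbar n - v‖ ^ 2 ≤ ‖x n - v‖ ^ 2 + (k n - 1) * (‖x n‖ + ω) ^ 2} := rfl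
      rw [this, hhalf]
      refine ih.inter (convex_halfSpace_le ⟨fun u v => inner_add_right _ _ _,
        fun c u => real_inner_smul_right _ _ _⟩ _)
  -- membership facts
  have hyC : ∀ n i, y n i ∈ C := fun n i => (hy n i).1
  have hybarC : ∀ n, ybar n ∈ C := fun n => (hybar n) ▸ hyC n (iN n)
  have hyVar : ∀ n i, ∀ w ∈ C, ⟪(x n - r n • A i (x n)) - y n i, w - y n i⟫ ≤ 0 :=
    fun n i => isProjOn_inner_nonpos hCcv (hy n i)
  have hxC : ∀ n, x n ∈ C := by
    intro n
    cases n with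
    | zero => exact hx0
    | succ n => exact hCsubC (n + 1) (hxproj n).1
  -- the key one-step estimates
  have hYB : ∀ n (p : H), p ∈ F → ∀ i, ‖y n i - p‖ ^ 2
      ≤ ‖x n - p‖ ^ 2 - d * (2 * α - e) * ‖A i (x n) - A i p‖ ^ 2
        - ‖(x n - y n i) - r n • (A i (x n) - A i p)‖ ^ 2 := by
    intro n p hp i
    have hpC := hFC p hp
    set u := x n - r n • A i (x n) with hu
    set v := p - r n • A i p with hv
    have h2 : ∀ w ∈ C, ⟪v - p, w - p⟫ ≤ 0 := by
      intro w hw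
      have hev : v - p = (-(r n)) • A i p := by rw [hv]; module
      rw [hev, real_inner_smul_left]
      have := hFVI p hp i w hw
      nlinarith [hr0 n]
    have hfirm := firm_ineq (hyVar n i) h2 (hyC n i) hpC
    have huv : u - v = (x n - p) - r n • (A i (x n) - A i p) := by
      rw [hu, hv]; module
    have huv2 : ‖u - v‖ ^ 2 ≤ ‖x n - p‖ ^ 2 - d * (2 * α - e) * ‖A i (x n) - A i p‖ ^ 2 := by
      rw [huv, norm_sub_sq_real, real_inner_smul_right, norm_smul, Real.norm_eq_abs,
        abs_of_pos (hr0 n), real_inner_comm]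
      have hism' := hism i (x n) (hxC n) p hpC
      have h5 : r n * (α * ‖A i (x n) - A i p‖ ^ 2) ≤ r n * ⟪A i (x n) - A i p, x n - p⟫ :=
        mul_le_mul_of_nonneg_left hism' (hr0 n).le
      have h6 : (0:ℝ) ≤ ‖A i (x n) - A i p‖ ^ 2 * ((r n - d) * (2 * α - e)) :=
        mul_nonneg (sq_nonneg _) (mul_nonneg (by linarith [(hr n).1]) (by linarith))
      have h7 : (0:ℝ) ≤ ‖A i (x n) - A i p‖ ^ 2 * (r n * (e - r n)) :=
        mul_nonneg (sq_nonneg _) (mul_nonneg (hr0 n).le (by linarith [(hr n).2]))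
      nlinarith
    have hw : (u - v) - (y n i - p) = (x n - y n i) - r n • (A i (x n) - A i p) := by
      rw [hu, hv]; module
    rw [hw] at hfirm
    linarith
  have hTB : ∀ n (p : H), p ∈ F → ∀ j, ∀ u ∈ C,
      ‖(β n • u + (1 - β n) • (S j)^[n] u) - p‖ ^ 2 ≤ k n * ‖u - p‖ ^ 2 := by
    intro n p hp j u hu
    have hβn := hβ n
    rcases Nat.eq_zero_or_pos n with hn0 | hn1
    · subst hn0
      simp only [Function.iterate_zero_apply]
      have heq : β 0 • u + (1 - β 0) • u = u := by module
      rw [heq]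
      nlinarith [sq_nonneg ‖u - p‖, hk1 0]
    · have hpC := hFC p hp
      have hTp : (S j)^[n] p = p := Function.iterate_fixed (hFfix p hp j) n
      have hvec : (β n • u + (1 - β n) • (S j)^[n] u) - p
          = β n • (u - p) + (1 - β n) • ((S j)^[n] u - p) := by module
      rw [hvec, combo_sq_eq]
      have hdif : (u - p) - ((S j)^[n] u - p) = u - (S j)^[n] u := by abel
      rw [hdif]
      have hq := hasym j n hn1 u hu p hpC
      rw [hTp] at hq
      have hd2 : u - (S j)^[n] u - (p - p) = u - (S j)^[n] u := by abel
      rw [hd2] at hq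
      have hβ0 : (0:ℝ) ≤ β n := le_trans hκ0 hβn.1
      have hβ1 : (0:ℝ) ≤ 1 - β n := by linarith [hβn.2]
      have h8 := mul_le_mul_of_nonneg_left hq hβ1
      have h9 : (0:ℝ) ≤ β n * (k n - 1) * ‖u - p‖ ^ 2 :=
        mul_nonneg (mul_nonneg hβ0 (by linarith [hk1 n])) (sq_nonneg _)
      have h10 : (0:ℝ) ≤ (1 - β n) * (β n - κ) * ‖u - (S j)^[n] u‖ ^ 2 :=
        mul_nonneg (mul_nonneg hβ1 (by linarith [hβn.1])) (sq_nonneg _)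
      nlinarith
  have hZB : ∀ n (p : H), p ∈ F → ∀ j,
      ‖z n j - p‖ ^ 2 ≤ a n * ‖x n - p‖ ^ 2 + (1 - a n) * (k n * ‖ybar n - p‖ ^ 2) := by
    intro n p hp j
    have hvec : z n j - p = a n • (x n - p)
        + (1 - a n) • ((β n • ybar n + (1 - β n) • (S j)^[n] (ybar n)) - p) := by
      rw [hz n j]; module
    rw [hvec, combo_sq_eq]
    have h1 := hTB n p hp j (ybar n) (hybarC n)
    have e1 := mul_le_mul_of_nonneg_left h1 (by linarith [ha1 n] : (0:ℝ) ≤ 1 - a n)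
    have e2 : (0:ℝ) ≤ a n * (1 - a n)
        * ‖(x n - p) - ((β n • ybar n + (1 - β n) • (S j)^[n] (ybar n)) - p)‖ ^ 2 :=
      mul_nonneg (mul_nonneg (ha0 n).le (by linarith [ha1 n])) (sq_nonneg _)
    linarith
  have hyle : ∀ n (p : H), p ∈ F → ‖ybar n - p‖ ^ 2 ≤ ‖x n - p‖ ^ 2 := by
    intro n p hp
    have h1 := hYB n p hp (iN n)
    rw [← hybar n] at h1
    have t1 : (0:ℝ) ≤ d * (2 * α - e) * ‖A (iN n) (x n) - A (iN n) p‖ ^ 2 :=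
      mul_nonneg hde.le (sq_nonneg _)
    have t2 : (0:ℝ) ≤ ‖(x n - ybar n) - r n • (A (iN n) (x n) - A (iN n) p)‖ ^ 2 :=
      sq_nonneg _
    linarith
  have hcore : ∀ n (p : H), p ∈ F →
      ‖zbar n - p‖ ^ 2 ≤ ‖x n - p‖ ^ 2 + (k n - 1) * (‖x n‖ + ω) ^ 2 := by
    intro n p hp
    have h1 := hZB n p hp (jM n)
    rw [← hzbar n] at h1
    have h2 := hyle n p hp
    have h3 : ‖x n - p‖ ≤ ‖x n‖ + ω := (norm_sub_le _ _).trans (by linarith [hFb p hp])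
    have h4 := ha0 n
    have h5 := ha1 n
    have h6 := hk1 n
    have hPG : ‖x n - p‖ ^ 2 ≤ (‖x n‖ + ω) ^ 2 := pow_le_pow_left₀ (norm_nonneg _) h3 2
    nlinarith [mul_le_mul_of_nonneg_left h2
        (le_of_lt (mul_pos (by linarith : (0:ℝ) < 1 - a n) (by linarith : (0:ℝ) < k n))),
      mul_nonneg (mul_nonneg h4.le (by linarith : (0:ℝ) ≤ k n - 1)) (sq_nonneg ‖x n - p‖),
      mul_nonneg (by linarith : (0:ℝ) ≤ k n - 1) (sub_nonneg.mpr hPG)]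
  have hFsub : ∀ n, F ⊆ Cset n := by
    intro n
    induction n with
    | zero => rw [hC0]; exact fun v hv => hFC v hv
    | succ n ih =>
      rw [hCset n]
      exact fun v hv => ⟨ih hv, hcore n v hv⟩
  -- boundedness of the iterates
  obtain ⟨p0, hp0⟩ := hFne
  set B : ℝ := ‖x 0‖ + ‖p0 - x 0‖ with hB
  have hxB : ∀ n, ‖x n‖ ≤ B := by
    intro n
    cases n with
    | zero => have : (0:ℝ) ≤ ‖p0 - x 0‖ := norm_nonneg _; simp only [hB]; linarith
    | succ n =>
      have h1 := (hxproj n).2 p0 (hFsub (n + 1) hp0)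
      have h2 : ‖x (n + 1)‖ - ‖x 0‖ ≤ ‖x (n + 1) - x 0‖ := norm_sub_norm_le _ _
      simp only [hB]; linarith
  set D : ℕ → ℝ := fun n => ‖x n - x 0‖ with hD
  have hDmono : Monotone D := by
    apply monotone_nat_of_le_succ
    intro n
    cases n with
    | zero => simp only [hD, sub_self, norm_zero]; exact norm_nonneg _
    | succ m =>
      exact (hxproj m).2 (x (m + 2)) (hCanti (m + 1) (hxproj (m + 1)).1)
  have hDbdd : BddAbove (Set.range D) := by
    refine ⟨‖p0 - x 0‖, fun t ht => ?_⟩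
    obtain ⟨n, rfl⟩ := ht
    cases n with
    | zero => simp only [hD, sub_self, norm_zero]; exact norm_nonneg _
    | succ n => exact (hxproj n).2 p0 (hFsub (n + 1) hp0)
  set ℓ : ℝ := ⨆ n, D n with hℓ
  have hDconv : Filter.Tendsto D Filter.atTop (nhds ℓ) := tendsto_atTop_ciSup hDmono hDbdd
  have hDle : ∀ n, D n ≤ ℓ := fun n => le_ciSup hDbdd n
  have hdiff : ∀ n m, n ≤ m → ‖x (m + 1) - x (n + 1)‖ ^ 2 ≤ D (m + 1) ^ 2 - D (n + 1) ^ 2 := by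
    intro n m h
    have hmem : x (m + 1) ∈ Cset (n + 1) := hCmono (m + 1) (n + 1) (by omega) (hxproj m).1
    have hvar := isProjOn_inner_nonpos (hCconvex (n + 1)) (hxproj n) (x (m + 1)) hmem
    have hexp : x (m + 1) - x 0 = (x (m + 1) - x (n + 1)) + (x (n + 1) - x 0) := by abel
    have h2 : D (m + 1) ^ 2 = ‖x (m + 1) - x (n + 1)‖ ^ 2
        + 2 * ⟪x (m + 1) - x (n + 1), x (n + 1) - x 0⟫ + D (n + 1) ^ 2 := by
      simp only [hD]; rw [hexp, norm_add_sq_real]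
    have h3 : ⟪x (m + 1) - x (n + 1), x (n + 1) - x 0⟫
        = -⟪x 0 - x (n + 1), x (m + 1) - x (n + 1)⟫ := by
      rw [show x (n + 1) - x 0 = -(x 0 - x (n + 1)) by abel, inner_neg_right, real_inner_comm]
    linarith
  have hCauchy : CauchySeq x := by
    rw [Metric.cauchySeq_iff']
    intro ε hε
    have hD2 : Filter.Tendsto (fun n => D n ^ 2) Filter.atTop (nhds (ℓ ^ 2)) := hDconv.pow 2
    have hev : ∀ᶠ n in Filter.atTop, ℓ ^ 2 - D n ^ 2 < ε ^ 2 := by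
      have h4 := (tendsto_order.mp hD2).1 (ℓ ^ 2 - ε ^ 2) (by nlinarith)
      filter_upwards [h4] with n hn
      linarith
    obtain ⟨N0, hN0⟩ := Filter.eventually_atTop.mp hev
    refine ⟨N0 + 1, fun n hn => ?_⟩
    obtain ⟨t, rfl⟩ := Nat.exists_eq_add_of_le hn
    have hidx : N0 + 1 + t = (N0 + t) + 1 := by omega
    rw [dist_eq_norm, hidx]
    have h1 := hdiff N0 (N0 + t) (Nat.le_add_right _ _)
    have h2 : D (N0 + t + 1) ≤ ℓ := hDle _
    have h3 := hN0 (N0 + 1) (by omega)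
    have h4 : (0:ℝ) ≤ D (N0 + t + 1) := norm_nonneg _
    have h5 : (0:ℝ) ≤ ‖x (N0 + t + 1) - x (N0 + 1)‖ := norm_nonneg _
    nlinarith
  obtain ⟨q, hxq⟩ := cauchySeq_tendsto_of_complete hCauchy
  have hqC : q ∈ C := hCcl.mem_of_tendsto hxq (Filter.Eventually.of_forall hxC)
  -- elementary limit facts
  have hx1q : Filter.Tendsto (fun n => x (n + 1)) Filter.atTop (nhds q) :=
    hxq.comp (tendsto_add_atTop_nat 1)
  have hxx1 : Filter.Tendsto (fun n => ‖x (n + 1) - x n‖) Filter.atTop (nhds 0) := by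
    have h1 := hx1q.sub hxq
    rw [sub_self] at h1
    exact tendsto_zero_iff_norm_tendsto_zero.mp h1
  have hεlim : Filter.Tendsto (fun n => (k n - 1) * (B + ω) ^ 2) Filter.atTop (nhds 0) := by
    have h1 : Filter.Tendsto (fun n => k n - 1) Filter.atTop (nhds 0) := by
      simpa using hklim.sub_const 1
    simpa using h1.mul_const ((B + ω) ^ 2)
  have hε0 : Filter.Tendsto (fun n => (k n - 1) * (‖x n‖ + ω) ^ 2) Filter.atTop (nhds 0) := by
    refine squeeze_zero (fun n => mul_nonneg (by linarith [hk1 n]) (sq_nonneg _))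
      (fun n => ?_) hεlim
    exact mul_le_mul_of_nonneg_left
      (pow_le_pow_left₀ (by positivity) (by linarith [hxB n]) 2) (by linarith [hk1 n])
  have hzx1 : Filter.Tendsto (fun n => ‖zbar n - x (n + 1)‖) Filter.atTop (nhds 0) := by
    refine tendsto_of_sq (fun n => norm_nonneg _) ?_
    refine squeeze_zero (fun n => sq_nonneg _) (fun n => ?_)
      (by simpa using (hxx1.pow 2).add hε0)
    have hmem : x (n + 1) ∈ Cset (n + 1) := (hxproj n).1
    rw [hCset n] at hmem
    have h := hmem.2
    rwa [norm_sub_rev (x n)] at h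
  have hzx : Filter.Tendsto (fun n => ‖zbar n - x n‖) Filter.atTop (nhds 0) := by
    refine squeeze_zero (fun n => norm_nonneg _) (fun n => ?_)
      (by simpa using hzx1.add hxx1)
    have hid : zbar n - x n = (zbar n - x (n + 1)) + (x (n + 1) - x n) := by abel
    rw [hid]
    exact norm_add_le _ _
  have hzjx : ∀ j, Filter.Tendsto (fun n => ‖z n j - x n‖) Filter.atTop (nhds 0) := by
    intro j
    refine squeeze_zero (fun n => norm_nonneg _) (fun n => ?_) hzx
    rw [hzbar n]
    exact hjM n j
  -- the parameter bound eventually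
  have hcob : Filter.IsBoundedUnder (· ≤ ·) Filter.atTop a :=
    Filter.isBoundedUnder_of ⟨1, fun n => (ha1 n).le⟩
  set c : ℝ := (Filter.limsup a Filter.atTop + 1) / 2 with hcdef
  have hc1 : c < 1 := by rw [hcdef]; linarith
  have hlc : Filter.limsup a Filter.atTop < c := by rw [hcdef]; linarith
  have heva : ∀ᶠ n in Filter.atTop, a n < c := Filter.eventually_lt_of_limsup_lt hlc hcob
  set δ : ℝ := 1 - c with hδdef
  have hδ : 0 < δ := by rw [hδdef]; linarith
  -- the quantitative residual estimate
  set ΔA : ℕ → H := fun n => A (iN n) (x n) - A (iN n) p0 with hΔAdef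
  set W : ℕ → H := fun n => (x n - ybar n) - r n • ΔA n with hWdef
  set R : ℕ → ℝ := fun n => d * (2 * α - e) * ‖ΔA n‖ ^ 2 + ‖W n‖ ^ 2 with hRdef
  set g : ℕ → ℝ := fun n =>
    (k n - 1) * (B + ω) ^ 2 + ‖x n - zbar n‖ * (2 * (B + ω) + ‖x n - zbar n‖) with hgdef
  have hxz0 : Filter.Tendsto (fun n => ‖x n - zbar n‖) Filter.atTop (nhds 0) := by
    refine hzx.congr (fun n => ?_)
    rw [norm_sub_rev]
  have hg0 : Filter.Tendsto g Filter.atTop (nhds 0) := by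
    have h1 := hxz0.mul (tendsto_const_nhds (x := 2 * (B + ω)) |>.add hxz0)
    have h2 := hεlim.add h1
    simpa [hgdef] using h2
  have hXb : ∀ n, ‖x n - p0‖ ≤ B + ω := by
    intro n
    have := hFb p0 hp0
    have := hxB n
    have := norm_sub_le (x n) p0
    linarith
  have hRnonneg : ∀ n, 0 ≤ R n := by
    intro n
    rw [hRdef]
    have : 0 < 2 * α - e := by linarith
    positivity
  have hRg : ∀ n, (1 - a n) * R n ≤ g n := by
    intro n
    have e1 := hZB n p0 hp0 (jM n)
    rw [← hzbar n] at e1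
    have e2 : ‖ybar n - p0‖ ^ 2 ≤ ‖x n - p0‖ ^ 2 - R n := by
      have := hYB n p0 hp0 (iN n)
      rw [← hybar n] at this
      rw [hRdef, hΔAdef, hWdef]
      simp only
      linarith
    have e3 := hXb n
    have e4 : |‖x n - p0‖ - ‖zbar n - p0‖| ≤ ‖x n - zbar n‖ := by
      have h := abs_norm_sub_norm_le (x n - p0) (zbar n - p0)
      rwa [show (x n - p0) - (zbar n - p0) = x n - zbar n by abel] at h
    obtain ⟨e4a, e4b⟩ := abs_le.mp e4
    have hk := hk1 n
    have ha0' := ha0 n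
    have ha1' := ha1 n
    have hZn : ‖zbar n - p0‖ ≤ ‖x n - p0‖ + ‖x n - zbar n‖ := by linarith
    have hXn : (0:ℝ) ≤ ‖x n - p0‖ := norm_nonneg _
    have hZn0 : (0:ℝ) ≤ ‖zbar n - p0‖ := norm_nonneg _
    have hc0 : (0:ℝ) ≤ ‖x n - zbar n‖ := norm_nonneg _
    have m1 := mul_le_mul_of_nonneg_left e2
      (mul_nonneg (by linarith : (0:ℝ) ≤ 1 - a n) (by linarith : (0:ℝ) ≤ k n))
    have m2 : (0:ℝ) ≤ (1 - a n) * (k n - 1) * R n :=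
      mul_nonneg (mul_nonneg (by linarith) (by linarith)) (hRnonneg n)
    have m3 : (0:ℝ) ≤ a n * (k n - 1) * ‖x n - p0‖ ^ 2 :=
      mul_nonneg (mul_nonneg (by linarith) (by linarith)) (sq_nonneg _)
    have m4 : ‖x n - p0‖ ^ 2 ≤ (B + ω) ^ 2 := pow_le_pow_left₀ hXn e3 2
    have m5 : ‖x n - p0‖ ^ 2 - ‖zbar n - p0‖ ^ 2
        ≤ ‖x n - zbar n‖ * (2 * (B + ω) + ‖x n - zbar n‖) := by nlinarith
    rw [hgdef]
    simp only
    nlinarith [mul_nonneg (by linarith : (0:ℝ) ≤ k n - 1) (sub_nonneg.mpr m4)]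
  have hR0 : Filter.Tendsto R Filter.atTop (nhds 0) := by
    refine squeeze_zero' (Filter.Eventually.of_forall hRnonneg) ?_
      (by simpa using hg0.div_const δ)
    filter_upwards [heva] with n hn
    rw [le_div_iff₀ hδ]
    have h1 : δ ≤ 1 - a n := by rw [hδdef]; linarith
    have h2 := hRg n
    nlinarith [hRnonneg n]
  have hΔA0 : Filter.Tendsto (fun n => ‖ΔA n‖) Filter.atTop (nhds 0) := by
    refine tendsto_of_sq (fun n => norm_nonneg _) ?_
    refine squeeze_zero (fun n => sq_nonneg _) (fun n => ?_)
      (by simpa using hR0.div_const (d * (2 * α - e)))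
    rw [le_div_iff₀ hde]
    have := hRnonneg n
    rw [hRdef]
    simp only
    nlinarith [sq_nonneg ‖W n‖]
  have hW0 : Filter.Tendsto (fun n => ‖W n‖) Filter.atTop (nhds 0) := by
    refine tendsto_of_sq (fun n => norm_nonneg _) ?_
    refine squeeze_zero (fun n => sq_nonneg _) (fun n => ?_) hR0
    rw [hRdef]
    simp only
    have : 0 < 2 * α - e := by linarith
    nlinarith [sq_nonneg ‖ΔA n‖, mul_nonneg (mul_nonneg hd.le this.le) (sq_nonneg ‖ΔA n‖)]
  have hxyb : Filter.Tendsto (fun n => ‖x n - ybar n‖) Filter.atTop (nhds 0) := by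
    refine squeeze_zero (fun n => norm_nonneg _) (fun n => ?_)
      (by simpa using hW0.add (hΔA0.const_mul e))
    have hid : x n - ybar n = W n + r n • ΔA n := by rw [hWdef]; simp only; abel
    rw [hid]
    refine (norm_add_le _ _).trans ?_
    have h2 : ‖r n • ΔA n‖ ≤ e * ‖ΔA n‖ := by
      rw [norm_smul, Real.norm_eq_abs, abs_of_pos (hr0 n)]
      exact mul_le_mul_of_nonneg_right (hr n).2 (norm_nonneg _)
    linarith
  have hxqn : Filter.Tendsto (fun n => ‖x n - q‖) Filter.atTop (nhds 0) :=
    tendsto_iff_norm_sub_tendsto_zero.mp hxq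
  have hybq : Filter.Tendsto ybar Filter.atTop (nhds q) := by
    rw [tendsto_iff_norm_sub_tendsto_zero]
    refine squeeze_zero (fun n => norm_nonneg _) (fun n => ?_) (by simpa using hxyb.add hxqn)
    have hid : ybar n - q = -(x n - ybar n) + (x n - q) := by abel
    rw [hid]
    exact (norm_add_le _ _).trans (by rw [norm_neg])
  have hybqn : Filter.Tendsto (fun n => ‖ybar n - q‖) Filter.atTop (nhds 0) :=
    tendsto_iff_norm_sub_tendsto_zero.mp hybq
  -- uniform Lipschitz constant for the iterates of S j
  obtain ⟨Kb, hKbub⟩ := hklim.bddAbove_range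
  have hKb : ∀ n, k n ≤ Kb := fun n => hKbub ⟨n, rfl⟩
  set L : ℝ := (3 + Kb) / (1 - κ) with hLdef
  have hκ' : (0:ℝ) < 1 - κ := by linarith
  have hKb1 : (1:ℝ) ≤ Kb := (hk1 0).trans (hKb 0)
  have hLeq : (1 - κ) * L = 3 + Kb := by rw [hLdef]; field_simp
  have hL1 : (1:ℝ) ≤ L := by rw [hLdef, le_div_iff₀ hκ']; linarith
  have hslope : κ ≤ (1 - κ) * L := by rw [hLeq]; linarith
  have hL0 : (0:ℝ) ≤ L := by linarith
  have uLip : ∀ j n, 1 ≤ n → ∀ u ∈ C, ∀ w ∈ C,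
      ‖(S j)^[n] u - (S j)^[n] w‖ ≤ L * ‖u - w‖ := by
    intro j n hn u hu w hw
    have hq := hasym j n hn u hu w hw
    have hineq : ‖(S j)^[n] u - (S j)^[n] w‖ ^ 2
        ≤ k n * ‖u - w‖ ^ 2 + κ * (‖u - w‖ + ‖(S j)^[n] u - (S j)^[n] w‖) ^ 2 := by
      refine hq.trans ?_
      have htri : ‖(u - (S j)^[n] u) - (w - (S j)^[n] w)‖
          ≤ ‖u - w‖ + ‖(S j)^[n] u - (S j)^[n] w‖ := by
        have hid : (u - (S j)^[n] u) - (w - (S j)^[n] w)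
            = (u - w) - ((S j)^[n] u - (S j)^[n] w) := by abel
        rw [hid]
        exact norm_sub_le _ _
      have h1 : ‖(u - (S j)^[n] u) - (w - (S j)^[n] w)‖ ^ 2
          ≤ (‖u - w‖ + ‖(S j)^[n] u - (S j)^[n] w‖) ^ 2 := by
        nlinarith [norm_nonneg ((u - (S j)^[n] u) - (w - (S j)^[n] w)),
          norm_nonneg (u - w), norm_nonneg ((S j)^[n] u - (S j)^[n] w)]
      nlinarith
    have hquad : 2 * κ * L + (k n + κ) ≤ (1 - κ) * L ^ 2 := by
      have he2 : (1 - κ) * L ^ 2 = (3 + Kb) * L := by rw [← hLeq]; ring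
      rw [he2]
      nlinarith [hKb n, hk1 n, mul_le_mul_of_nonneg_left hL1
        (by linarith : (0:ℝ) ≤ 3 + Kb - 2 * κ)]
    exact lip_of_quad hκ1 (norm_nonneg _) hquad hL1 hslope hineq
  -- asymptotic regularity : ‖S_j^n ȳₙ - ȳₙ‖ → 0
  have hSres : ∀ j, Filter.Tendsto (fun n => ‖(S j)^[n] (ybar n) - ybar n‖)
      Filter.atTop (nhds 0) := by
    intro j
    have hub : Filter.Tendsto
        (fun n => (‖z n j - x n‖ + 2 * ‖x n - ybar n‖) / (δ * (1 - b)))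
        Filter.atTop (nhds 0) := by
      have h1 := (hzjx j).add (hxyb.const_mul 2)
      have h2 := h1.div_const (δ * (1 - b))
      simpa [mul_comm] using h2
    refine squeeze_zero' (Filter.Eventually.of_forall (fun n => norm_nonneg _)) ?_ hub
    filter_upwards [heva] with n hn
    have hδb : 0 < δ * (1 - b) := mul_pos hδ (by linarith)
    rw [le_div_iff₀ hδb]
    have hβb := (hβ n).2
    have ha1' := ha1 n
    have ha0' := ha0 n
    have hvec : ((1 - a n) * (1 - β n)) • ((S j)^[n] (ybar n) - ybar n)
        = (z n j - ybar n) - a n • (x n - ybar n) := by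
      rw [hz n j]; module
    have h1 : (1 - a n) * (1 - β n) * ‖(S j)^[n] (ybar n) - ybar n‖
        = ‖(z n j - ybar n) - a n • (x n - ybar n)‖ := by
      rw [← hvec, norm_smul, Real.norm_eq_abs, abs_of_nonneg
        (mul_nonneg (by linarith) (by linarith))]
    have h2 : ‖(z n j - ybar n) - a n • (x n - ybar n)‖
        ≤ ‖z n j - x n‖ + 2 * ‖x n - ybar n‖ := by
      have hid : (z n j - ybar n) - a n • (x n - ybar n)
          = (z n j - x n) + ((1:ℝ) - a n) • (x n - ybar n) := by module
      rw [hid]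
      refine (norm_add_le _ _).trans ?_
      have h3 : ‖((1:ℝ) - a n) • (x n - ybar n)‖ ≤ 2 * ‖x n - ybar n‖ := by
        rw [norm_smul, Real.norm_eq_abs, abs_of_nonneg (by linarith : (0:ℝ) ≤ 1 - a n)]
        nlinarith [norm_nonneg (x n - ybar n)]
      linarith
    have h3 : δ * (1 - b) ≤ (1 - a n) * (1 - β n) := by
      have hδa : δ ≤ 1 - a n := by rw [hδdef]; linarith
      have hbβ : 1 - b ≤ 1 - β n := by linarith
      nlinarith [hδ.le]
    nlinarith [mul_le_mul_of_nonneg_left h3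
      (norm_nonneg ((S j)^[n] (ybar n) - ybar n))]
  have hSnq : ∀ j, Filter.Tendsto (fun n => (S j)^[n] (ybar n)) Filter.atTop (nhds q) := by
    intro j
    rw [tendsto_iff_norm_sub_tendsto_zero]
    refine squeeze_zero (fun n => norm_nonneg _) (fun n => ?_)
      (by simpa using (hSres j).add hybqn)
    have hid : (S j)^[n] (ybar n) - q = ((S j)^[n] (ybar n) - ybar n) + (ybar n - q) := by abel
    rw [hid]
    exact norm_add_le _ _
  -- q is a fixed point of each S j
  have hfix : ∀ j, S j q = q := by
    intro j
    have hybC : ∀ n, (S j)^[n] (ybar n) ∈ C := fun n => ((hS j).iterate n) (hybarC n)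
    have hyshift : Filter.Tendsto (fun n => ‖ybar n - ybar (n + 1)‖) Filter.atTop (nhds 0) := by
      have h1 := hybq.sub (hybq.comp (tendsto_add_atTop_nat 1))
      rw [sub_self] at h1
      exact tendsto_zero_iff_norm_tendsto_zero.mp h1
    have hshift2 : Filter.Tendsto (fun n => ‖(S j)^[n + 1] (ybar (n + 1)) - q‖)
        Filter.atTop (nhds 0) := by
      have h1 : Filter.Tendsto (fun n => (S j)^[n + 1] (ybar (n + 1)))
          Filter.atTop (nhds q) := by
        simpa [Function.comp_def] using (hSnq j).comp (tendsto_add_atTop_nat 1)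
      exact tendsto_iff_norm_sub_tendsto_zero.mp h1
    have hAq : Filter.Tendsto (fun n => (S j)^[n + 1] (ybar n)) Filter.atTop (nhds q) := by
      rw [tendsto_iff_norm_sub_tendsto_zero]
      refine squeeze_zero (fun n => norm_nonneg _) (fun n => ?_)
        (by simpa using (hyshift.const_mul L).add hshift2)
      have hid : (S j)^[n + 1] (ybar n) - q
          = ((S j)^[n + 1] (ybar n) - (S j)^[n + 1] (ybar (n + 1)))
            + ((S j)^[n + 1] (ybar (n + 1)) - q) := by abel
      rw [hid]
      refine (norm_add_le _ _).trans ?_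
      have h1 := uLip j (n + 1) (by omega) (ybar n) (hybarC n) (ybar (n + 1)) (hybarC (n + 1))
      have h2 : ‖(S j)^[n + 1] (ybar (n + 1)) - q‖ = ‖(S j)^[n + 1] (ybar (n + 1)) - q‖ := rfl
      show _ ≤ L * ‖ybar n - ybar (n + 1)‖ + ‖(S j)^[n + 1] (ybar (n + 1)) - q‖
      linarith
    have hSq : Filter.Tendsto (fun n => (S j)^[n + 1] (ybar n)) Filter.atTop (nhds (S j q)) := by
      rw [tendsto_iff_norm_sub_tendsto_zero]
      have hup : Filter.Tendsto (fun n => L * ‖(S j)^[n] (ybar n) - q‖)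
          Filter.atTop (nhds 0) := by
        have h1 := tendsto_iff_norm_sub_tendsto_zero.mp (hSnq j)
        simpa using h1.const_mul L
      refine squeeze_zero (fun n => norm_nonneg _) (fun n => ?_) hup
      have hit : (S j)^[n + 1] (ybar n) = S j ((S j)^[n] (ybar n)) :=
        Function.iterate_succ_apply' (S j) n (ybar n)
      rw [hit]
      have h1 := uLip j 1 le_rfl ((S j)^[n] (ybar n)) (hybC n) q hqC
      simpa [Function.iterate_one] using h1
    exact tendsto_nhds_unique hSq hAq
  -- q solves each variational inequality
  have hVI : ∀ i, ∀ w ∈ C, 0 ≤ ⟪A i q, w - q⟫ := by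
    intro i w hw
    have hyix : Filter.Tendsto (fun n => ‖y n i - x n‖) Filter.atTop (nhds 0) := by
      refine squeeze_zero (fun n => norm_nonneg _) (fun n => ?_)
        (hxyb.congr (fun n => by rw [norm_sub_rev]))
      rw [hybar n] at *
      exact hiN n i
    have hyiq : Filter.Tendsto (fun n => y n i) Filter.atTop (nhds q) := by
      rw [tendsto_iff_norm_sub_tendsto_zero]
      refine squeeze_zero (fun n => norm_nonneg _) (fun n => ?_)
        (by simpa using hyix.add hxqn)
      have hid : y n i - q = (y n i - x n) + (x n - q) := by abel
      rw [hid]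
      exact norm_add_le _ _
    have hAlim : Filter.Tendsto (fun n => A i (x n)) Filter.atTop (nhds (A i q)) := by
      rw [tendsto_iff_norm_sub_tendsto_zero]
      refine squeeze_zero (fun n => norm_nonneg _) (fun n => ?_)
        (by simpa using hxqn.div_const α)
      have hcs := hism i (x n) (hxC n) q hqC
      have hcs2 := real_inner_le_norm (A i (x n) - A i q) (x n - q)
      rw [le_div_iff₀ hα]
      nlinarith [norm_nonneg (A i (x n) - A i q), norm_nonneg (x n - q)]
    have hinner : Filter.Tendsto (fun n => ⟪A i (x n), w - y n i⟫)
        Filter.atTop (nhds ⟪A i q, w - q⟫) :=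
      hAlim.inner (tendsto_const_nhds.sub hyiq)
    have htail : Filter.Tendsto (fun n => -(‖x n - y n i‖ * ‖w - y n i‖) / d)
        Filter.atTop (nhds 0) := by
      have h1 : Filter.Tendsto (fun n => ‖x n - y n i‖) Filter.atTop (nhds 0) :=
        hyix.congr (fun n => by rw [norm_sub_rev])
      have h2 : Filter.Tendsto (fun n => ‖w - y n i‖) Filter.atTop (nhds ‖w - q‖) :=
        (tendsto_const_nhds.sub hyiq).norm
      have h3 := ((h1.mul h2).neg).div_const d
      simpa using h3
    have hlow : ∀ n, -(‖x n - y n i‖ * ‖w - y n i‖) / d ≤ ⟪A i (x n), w - y n i⟫ := by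
      intro n
      have hvar := hyVar n i w hw
      rw [show (x n - r n • A i (x n)) - y n i = (x n - y n i) - r n • (A i (x n)) by module] at hvar
      rw [inner_sub_left, real_inner_smul_left] at hvar
      have hcs := abs_real_inner_le_norm (x n - y n i) (w - y n i)
      have hcs2 := neg_abs_le ⟪x n - y n i, w - y n i⟫
      rw [div_le_iff₀ hd]
      rcases le_or_gt 0 ⟪A i (x n), w - y n i⟫ with ht | ht
      · nlinarith [mul_nonneg (norm_nonneg (x n - y n i)) (norm_nonneg (w - y n i))]
      · have h4 : r n * ⟪A i (x n), w - y n i⟫ ≤ d * ⟪A i (x n), w - y n i⟫ :=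
          mul_le_mul_of_nonpos_right (hr n).1 ht.le
        nlinarith
    exact le_of_tendsto_of_tendsto' htail hinner hlow
  have hqF : q ∈ F := by
    rw [hF]
    exact ⟨⟨hqC, hVI⟩, hfix⟩
  refine ⟨q, ⟨hqF, fun v hv => ?_⟩, hxq⟩
  have hler : ∀ n, ‖x (n + 1) - x 0‖ ≤ ‖v - x 0‖ := fun n =>
    (hxproj n).2 v (hFsub (n + 1) hv)
  have hnlim : Filter.Tendsto (fun n => ‖x (n + 1) - x 0‖) Filter.atTop (nhds ‖q - x 0‖) :=
    (hx1q.sub tendsto_const_nhds).norm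
  exact le_of_tendsto hnlim (Filter.Eventually.of_forall hler)
end

section
/- Let H be a real Hilbert space, C ⊆ H nonempty closed convex. Suppose each f_i (i = 1,…,N) satisfies (A1)–(A4), each A_i : C → H is α-inverse strongly monotone, each S_j : C → C (j = 1,…,M) is asymptotically nonexpansive with the same sequence {k_n} ⊆ [1,∞), k_n → 1, the parameters satisfy 0 < α_n < 1 with limsup α_n < 1 and 0 < d ≤ r_n ≤ e < 2α, and F = (∩_{i=1}^N GEP(f_i, A_i)) ∩ (∩_{j=1}^M F(S_j)) is nonempty and bounded with F ⊆ {v : ‖v‖ ≤ ω}. Let x_0 ∈ C, C_0 = C, and for n ≥ 0: y_n^i ∈ C satisfies f_i(y_n^i, y) + ⟨A_i x_n, y − y_n^i⟩ + (1/r_n)⟨y − y_n^i, y_n^i − x_n⟩ ≥ 0 for all y ∈ C; i_n maximizes ‖y_n^i − x_n‖ and ȳ_n = y_n^{i_n}; z_n^j = α_n x_n + (1−α_n) S_j^n ȳ_n; j_n maximizes ‖z_n^j − x_n‖ and z̄_n = z_n^{j_n}; C_{n+1} = {v ∈ C_n : ‖z̄_n − v‖² ≤ ‖x_n − v‖² +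 ε_n} with ε_n = (k_n² − 1)(‖x_n‖ + ω)²; x_{n+1} = P_{C_{n+1}} x_0. Then {x_n} converges strongly to P_F x_0. -/
/-!
The sets `Cₙ` are cut out of `C` by half-spaces, and they all contain `F`: the resolvents are
quasi-nonexpansive and `Sⱼⁿ` stretches distances to `F` by at most `kₙ`, which is exactly what
`εₙ` absorbs. So `xₙ = P_{Cₙ} x₀` are projections onto a decreasing sequence of convex sets
with a common point; Pythagoras' inequality `‖xₘ - xₙ‖² ≤ ‖xₘ - x₀‖² - ‖xₙ - x₀‖²` makes them
Cauchy, and their limit `p` is at least as close to `x₀` as any point of `F`.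

It remains to show `p ∈ F`. As `xₙ₊₁ ∈ Cₙ₊₁` and `εₙ → 0`, also `z̄ₙ → p`. Because
`limsup αₙ < 1`, the choice of `jₙ` forces `Sⱼⁿ ȳₙ → p` for every `j`, and the gap in the
resolvent inequality (coming from inverse strong monotonicity, `r ≤ e < 2α`) forces
`ȳₙ - xₙ → 0`, hence `yₙⁱ → p` for every `i` by the choice of `iₙ`. Asymptotic
nonexpansiveness then makes `p` a common fixed point, and lower semicontinuity together with
Minty's lemma, which is where (A1)–(A4) enter, show that `p` solves every `GEP(fᵢ, Aᵢ)`.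
-/

open scoped RealInnerProductSpace
open Filter Topology

section Geometry

variable {H : Type*} [NormedAddCommGroup H] [InnerProductSpace ℝ H]

lemma norm_smul_add_one_sub_smul_sq_le (p q : H) {a : ℝ} (h0 : 0 ≤ a) (h1 : a ≤ 1) :
    ‖a • p + (1 - a) • q‖ ^ 2 ≤ a * ‖p‖ ^ 2 + (1 - a) * ‖q‖ ^ 2 := by
  have hpq : ⟪p, q⟫ ≤ ‖p‖ * ‖q‖ := real_inner_le_norm p q
  rw [norm_add_sq_real, norm_smul, norm_smul, real_inner_smul_left, real_inner_smul_right,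
    Real.norm_of_nonneg h0, Real.norm_of_nonneg (sub_nonneg.2 h1)]
  nlinarith [sq_nonneg (‖p‖ - ‖q‖), mul_nonneg h0 (sub_nonneg.2 h1)]

lemma norm_smul_add_one_sub_smul_sub_sq_le {x y t u : H} {a k : ℝ} (ha0 : 0 ≤ a) (ha1 : a ≤ 1)
    (hk : 1 ≤ k) (ht : ‖t - u‖ ≤ k * ‖y - u‖) (hy : ‖y - u‖ ^ 2 ≤ ‖x - u‖ ^ 2) :
    ‖a • x + (1 - a) • t - u‖ ^ 2
      ≤ k ^ 2 * ‖x - u‖ ^ 2 - (1 - a) * (‖x - u‖ ^ 2 - ‖y - u‖ ^ 2) := by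
  have hsplit : a • x + (1 - a) • t - u = a • (x - u) + (1 - a) • (t - u) := by module
  have hconv := norm_smul_add_one_sub_smul_sq_le (x - u) (t - u) ha0 ha1
  have ht2 : ‖t - u‖ ^ 2 ≤ k ^ 2 * ‖y - u‖ ^ 2 := by
    rw [← mul_pow]; exact pow_le_pow_left₀ (norm_nonneg _) ht 2
  have hk2 : 0 ≤ k ^ 2 - 1 := by nlinarith
  rw [hsplit]
  nlinarith [mul_le_mul_of_nonneg_left ht2 (sub_nonneg.2 ha1),
    mul_nonneg hk2 (mul_nonneg ha0 (sq_nonneg ‖y - u‖)),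
    mul_nonneg hk2 (sub_nonneg.2 hy)]

lemma IsProjOn.inner_sub_le_zero {K : Set H} (hK : Convex ℝ K) {x p : H} (h : IsProjOn K x p)
    {v : H} (hv : v ∈ K) : ⟪x - p, v - p⟫ ≤ 0 := by
  have : Nonempty K := ⟨⟨p, h.1⟩⟩
  refine (norm_eq_iInf_iff_real_inner_le_zero hK h.1).1 (le_antisymm ?_ ?_) v hv
  · exact le_ciInf fun w => by simpa only [norm_sub_rev x] using h.2 w w.2
  · exact ciInf_le ⟨0, Set.forall_mem_range.2 fun w : K => norm_nonneg (x - w)⟩ (⟨p, h.1⟩ : K)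

lemma IsProjOn.norm_sub_sq_add_le {K : Set H} (hK : Convex ℝ K) {x p : H} (h : IsProjOn K x p)
    {v : H} (hv : v ∈ K) : ‖v - p‖ ^ 2 + ‖p - x‖ ^ 2 ≤ ‖v - x‖ ^ 2 := by
  have hinner := h.inner_sub_le_zero hK hv
  have hsplit := norm_add_sq_real (v - p) (p - x)
  rw [sub_add_sub_cancel, ← neg_sub x p, inner_neg_right, real_inner_comm, norm_neg] at hsplit
  rw [norm_sub_rev p x]
  linarith

lemma convex_setOf_norm_sub_sq_le_norm_sub_sq_add (z x : H) (c : ℝ) :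
    Convex ℝ {v | ‖z - v‖ ^ 2 ≤ ‖x - v‖ ^ 2 + c} := by
  have hlin : IsLinearMap ℝ fun v : H => 2 * ⟪x - z, v⟫ :=
    ⟨fun v w => by rw [inner_add_right]; ring,
      fun t v => by rw [real_inner_smul_right, smul_eq_mul]; ring⟩
  convert convex_halfSpace_le hlin (‖x‖ ^ 2 - ‖z‖ ^ 2 + c) using 1
  ext v
  rw [Set.mem_ofPred_eq, Set.mem_ofPred_eq, norm_sub_sq_real, norm_sub_sq_real, inner_sub_left]
  constructor <;> intro h <;> linarith

lemma exists_tendsto_of_isProjOn_antitone [CompleteSpace H] {K : ℕ → Set H} (hK : Antitone K)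
    (hKcv : ∀ n, Convex ℝ (K n)) {x₀ : H} {x : ℕ → H} (hx : ∀ n, IsProjOn (K n) x₀ (x n))
    {u : H} (hu : ∀ n, u ∈ K n) :
    ∃ p, Tendsto x atTop (𝓝 p) ∧ ∀ v, (∀ n, v ∈ K n) → ‖p - x₀‖ ≤ ‖v - x₀‖ := by
  set g : ℕ → ℝ := fun n => ‖x n - x₀‖ ^ 2
  have hpyth : ∀ n m, n ≤ m → ‖x m - x n‖ ^ 2 + g n ≤ g m := fun n m hnm =>
    (hx n).norm_sub_sq_add_le (hKcv n) (hK hnm (hx m).1)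
  have hmono : Monotone g := fun n m hnm => by nlinarith [hpyth n m hnm]
  have hbdd : BddAbove (Set.range g) := ⟨‖u - x₀‖ ^ 2, Set.forall_mem_range.2 fun n =>
    pow_le_pow_left₀ (norm_nonneg _) ((hx n).2 u (hu n)) 2⟩
  set L := ⨆ n, g n
  have hgL : Tendsto g atTop (𝓝 L) := tendsto_atTop_ciSup hmono hbdd
  have hcauchy : CauchySeq x := by
    refine cauchySeq_of_le_tendsto_0' (fun n => √(L - g n)) (fun n m hnm => ?_) ?_
    · rw [dist_eq_norm, norm_sub_rev]
      refine Real.le_sqrt_of_sq_le ?_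
      linarith [hpyth n m hnm, le_ciSup hbdd m]
    · simpa using ((tendsto_const_nhds (x := L)).sub hgL).sqrt
  obtain ⟨p, hp⟩ := cauchySeq_tendsto_of_complete hcauchy
  exact ⟨p, hp, fun v hv => le_of_tendsto ((hp.sub_const x₀).norm)
    (Eventually.of_forall fun n => (hx n).2 v (hv n))⟩

end Geometry

lemma sq_mul_norm_sub_sq_le {E : Type*} [NormedAddCommGroup E] {x u : E} {k ω : ℝ}
    (hk : 1 ≤ k) (hu : ‖u‖ ≤ ω) :
    k ^ 2 * ‖x - u‖ ^ 2 ≤ ‖x - u‖ ^ 2 + (k ^ 2 - 1) * (‖x‖ + ω) ^ 2 := by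
  have hxu : ‖x - u‖ ^ 2 ≤ (‖x‖ + ω) ^ 2 :=
    pow_le_pow_left₀ (norm_nonneg _) ((norm_sub_le x u).trans (by linarith)) 2
  nlinarith [mul_le_mul_of_nonneg_left hxu (by nlinarith : (0 : ℝ) ≤ k ^ 2 - 1)]

section CutSets

variable {α : Type*} {K : ℕ → Set α} {P : ℕ → α → Prop}

lemma antitone_of_succ_eq_sep (hK : ∀ n, K (n + 1) = {v ∈ K n | P n v}) : Antitone K :=
  antitone_nat_of_succ_le fun n => (hK n).symm ▸ Set.sep_subset _ _

lemma subset_of_succ_eq_sep (hK : ∀ n, K (n + 1) = {v ∈ K n | P n v}) {s : Set α}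
    (h0 : s ⊆ K 0) (hs : ∀ n, ∀ v ∈ s, P n v) (n : ℕ) : s ⊆ K n := by
  induction n with
  | zero => exact h0
  | succ n ih => rw [hK n]; exact fun v hv => ⟨ih hv, hs n v hv⟩

lemma convex_of_succ_eq_sep [AddCommGroup α] [Module ℝ α]
    (hK : ∀ n, K (n + 1) = {v ∈ K n | P n v}) (h0 : Convex ℝ (K 0))
    (hP : ∀ n, Convex ℝ {v | P n v}) (n : ℕ) : Convex ℝ (K n) := by
  induction n with
  | zero => exact h0
  | succ n ih => rw [hK n]; exact ih.inter (hP n)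

end CutSets

section Operators

variable {H : Type*} [NormedAddCommGroup H] [InnerProductSpace ℝ H]

def InverseStronglyMonotoneOn (A : H → H) (C : Set H) (α : ℝ) : Prop :=
  ∀ x ∈ C, ∀ y ∈ C, α * ‖A x - A y‖ ^ 2 ≤ ⟪A x - A y, x - y⟫

def IsGEPSolution (f : H → H → ℝ) (A : H → H) (C : Set H) (v : H) : Prop :=
  v ∈ C ∧ ∀ w ∈ C, 0 ≤ f v w + ⟪A v, w - v⟫

/-- `y = T_r x` for the resolvent `T_r` of the generalized equilibrium problem `GEP(f, A)`. -/
def IsGEPResolvent (f : H → H → ℝ) (A : H → H) (C : Set H) (r : ℝ) (x y : H) : Prop :=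
  y ∈ C ∧ ∀ w ∈ C, 0 ≤ f y w + ⟪A x, w - y⟫ + (1 / r) * ⟪w - y, y - x⟫

lemma InverseStronglyMonotoneOn.mul_norm_sub_le {A : H → H} {C : Set H} {α : ℝ}
    (hA : InverseStronglyMonotoneOn A C α) {x y : H} (hx : x ∈ C) (hy : y ∈ C) :
    α * ‖A x - A y‖ ≤ ‖x - y‖ := by
  have hcs := real_inner_le_norm (A x - A y) (x - y)
  rcases (norm_nonneg (A x - A y)).eq_or_lt with h0 | hpos
  · rw [← h0, mul_zero]; exact norm_nonneg _
  · nlinarith [hA x hx y hy]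

lemma InverseStronglyMonotoneOn.continuousOn {A : H → H} {C : Set H} {α : ℝ}
    (hA : InverseStronglyMonotoneOn A C α) (hα : 0 < α) : ContinuousOn A C := by
  refine (LipschitzOnWith.of_dist_le_mul (K := Real.toNNReal α⁻¹) fun x hx y hy => ?_).continuousOn
  rw [dist_eq_norm, dist_eq_norm, Real.coe_toNNReal _ (inv_nonneg.2 hα.le), inv_mul_eq_div,
    le_div_iff₀ hα, mul_comm]
  exact hA.mul_norm_sub_le hx hy

section Resolvent

variable {f : H → H → ℝ} {A : H → H} {C : Set H} {α r : ℝ} {x y u : H}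

lemma IsGEPResolvent.norm_sub_sq_le (hy : IsGEPResolvent f A C r x y) (hu : IsGEPSolution f A C u)
    (hmono : ∀ v ∈ C, ∀ w ∈ C, f v w + f w v ≤ 0) (hA : InverseStronglyMonotoneOn A C α)
    (hx : x ∈ C) (hr : 0 < r) :
    ‖y - u‖ ^ 2 ≤ ‖x - u‖ ^ 2 - (‖x - y‖ - r * ‖A x - A u‖) ^ 2
      - r * (2 * α - r) * ‖A x - A u‖ ^ 2 := by
  set D := A x - A u
  have hsum : 0 ≤ ⟪D, u - y⟫ + (1 / r) * ⟪u - y, y - x⟫ := by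
    have h1 := hy.2 u hu.1
    have h2 := hu.2 y hy.1
    have h3 := hmono y hy.1 u hu.1
    rw [← neg_sub u y, inner_neg_right] at h2
    rw [inner_sub_left]
    linarith
  have hsum' : 0 ≤ r * ⟪D, u - y⟫ + ⟪u - y, y - x⟫ := by
    have := mul_nonneg hr.le hsum
    rwa [mul_add, ← mul_assoc, mul_one_div_cancel hr.ne', one_mul] at this
  have hpol : 2 * ⟪u - y, y - x⟫ = ‖x - u‖ ^ 2 - ‖y - u‖ ^ 2 - ‖x - y‖ ^ 2 := by
    have h := norm_add_sq_real (u - y) (y - x)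
    rw [sub_add_sub_cancel, norm_sub_rev u x, norm_sub_rev u y, norm_sub_rev y x] at h
    linarith
  have hD : ⟪D, u - y⟫ ≤ ‖D‖ * ‖x - y‖ - α * ‖D‖ ^ 2 := by
    have hsplit : u - y = (x - y) - (x - u) := by abel
    rw [hsplit, inner_sub_right]
    linarith [real_inner_le_norm D (x - y), hA x hx u hu.1]
  nlinarith [mul_le_mul_of_nonneg_left hD hr.le]

lemma IsGEPResolvent.norm_sub_sq_le_norm_sub_sq (hy : IsGEPResolvent f A C r x y)
    (hu : IsGEPSolution f A C u) (hmono : ∀ v ∈ C, ∀ w ∈ C, f v w + f w v ≤ 0)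
    (hA : InverseStronglyMonotoneOn A C α) (hx : x ∈ C) (hr : 0 < r) (hrα : r ≤ 2 * α) :
    ‖y - u‖ ^ 2 ≤ ‖x - u‖ ^ 2 := by
  have := hy.norm_sub_sq_le hu hmono hA hx hr
  nlinarith [sq_nonneg (‖x - y‖ - r * ‖A x - A u‖), sq_nonneg ‖A x - A u‖,
    mul_nonneg hr.le (sub_nonneg.2 hrα)]

lemma IsGEPResolvent.norm_sub_sq_le_mul (hy : IsGEPResolvent f A C r x y)
    (hu : IsGEPSolution f A C u) (hmono : ∀ v ∈ C, ∀ w ∈ C, f v w + f w v ≤ 0)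
    (hA : InverseStronglyMonotoneOn A C α) (hx : x ∈ C) {d e : ℝ} (hd : 0 < d) (hdr : d ≤ r)
    (hre : r ≤ e) (he : e < 2 * α) :
    ‖x - y‖ ^ 2 ≤ (2 + 2 * e ^ 2 / (d * (2 * α - e))) * (‖x - u‖ ^ 2 - ‖y - u‖ ^ 2) := by
  set B := ‖A x - A u‖
  set W := ‖x - y‖ - r * B
  set c := d * (2 * α - e)
  have hc : 0 < c := mul_pos hd (by linarith)
  have hres := hy.norm_sub_sq_le hu hmono hA hx (hd.trans_le hdr)
  have hcr : c ≤ r * (2 * α - r) := mul_le_mul hdr (by linarith) (by linarith) (by linarith)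
  have hB : c * B ^ 2 ≤ ‖x - u‖ ^ 2 - ‖y - u‖ ^ 2 := by
    nlinarith [mul_le_mul_of_nonneg_right hcr (sq_nonneg B), sq_nonneg W]
  have hW : W ^ 2 ≤ ‖x - u‖ ^ 2 - ‖y - u‖ ^ 2 := by
    nlinarith [mul_nonneg (hc.le.trans hcr) (sq_nonneg B)]
  have hrB : (r * B) ^ 2 ≤ e ^ 2 * B ^ 2 := by
    rw [mul_pow]
    exact mul_le_mul_of_nonneg_right (pow_le_pow_left₀ (by linarith) hre 2) (sq_nonneg B)
  have hB' : e ^ 2 * B ^ 2 ≤ e ^ 2 / c * (‖x - u‖ ^ 2 - ‖y - u‖ ^ 2) := by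
    rw [div_mul_eq_mul_div, le_div_iff₀ hc]
    nlinarith [sq_nonneg e]
  calc ‖x - y‖ ^ 2 = (W + r * B) ^ 2 := by ring
    _ ≤ 2 * W ^ 2 + 2 * (r * B) ^ 2 := by nlinarith [sq_nonneg (W - r * B)]
    _ ≤ 2 * (‖x - u‖ ^ 2 - ‖y - u‖ ^ 2) + 2 * (e ^ 2 / c * (‖x - u‖ ^ 2 - ‖y - u‖ ^ 2)) := by
      linarith
    _ = _ := by ring

end Resolvent

section Equilibrium

variable {f : H → H → ℝ} {C : Set H}

lemma le_inner_of_tendsto_isGEPResolvent {A : H → H} {r : ℕ → ℝ} {d : ℝ} (hd : 0 < d)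
    (hr : ∀ n, d ≤ r n) (hmono : ∀ v ∈ C, ∀ w ∈ C, f v w + f w v ≤ 0)
    (hlsc : ∀ w ∈ C, LowerSemicontinuousOn (f w) C) {x y : ℕ → H} {p : H}
    (hy : ∀ n, IsGEPResolvent f A C (r n) (x n) (y n)) (hyp : Tendsto y atTop (𝓝 p))
    (hyx : Tendsto (fun n => ‖y n - x n‖) atTop (𝓝 0))
    (hAx : Tendsto (fun n => A (x n)) atTop (𝓝 (A p))) (hpC : p ∈ C) :
    ∀ w ∈ C, f w p ≤ ⟪A p, w - p⟫ := by
  intro w hw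
  have hbound : ∀ n, f w (y n) ≤ ⟪A (x n), w - y n⟫ + (1 / r n) * ⟪w - y n, y n - x n⟫ :=
    fun n => by linarith [(hy n).2 w hw, hmono (y n) (hy n).1 w hw]
  have hreg : Tendsto (fun n => (1 / r n) * ⟪w - y n, y n - x n⟫) atTop (𝓝 0) := by
    have hprod : Tendsto (fun n => ‖w - y n‖ * ‖y n - x n‖) atTop (𝓝 0) := by
      simpa using ((tendsto_const_nhds (x := w)).sub hyp).norm.mul hyx
    refine squeeze_zero_norm (fun n => ?_) (by simpa using hprod.const_mul d⁻¹)
    rw [norm_mul, Real.norm_of_nonneg (by have := hd.trans_le (hr n); positivity)]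
    exact mul_le_mul (by rw [one_div]; exact inv_anti₀ hd (hr n)) (norm_inner_le_norm _ _)
      (norm_nonneg _) (by positivity)
  have hlim : Tendsto (fun n => ⟪A (x n), w - y n⟫ + (1 / r n) * ⟪w - y n, y n - x n⟫) atTop
      (𝓝 ⟪A p, w - p⟫) := by
    simpa using (hAx.inner ((tendsto_const_nhds (x := w)).sub hyp)).add hreg
  have hyC : Tendsto y atTop (𝓝[C] p) :=
    tendsto_nhdsWithin_iff.2 ⟨hyp, Eventually.of_forall fun n => (hy n).1⟩
  refine le_of_forall_lt_imp_le_of_dense fun c hc => ge_of_tendsto hlim ?_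
  filter_upwards [hyC.eventually (hlsc w hw p hpC c hc)] with n hn
  exact hn.le.trans (hbound n)

lemma isBoundedUnder_le_segment_of_monotone_of_convexOn (hC : Convex ℝ C)
    (hmono : ∀ x ∈ C, ∀ y ∈ C, f x y + f y x ≤ 0) (hconv : ∀ x ∈ C, ConvexOn ℝ C (f x))
    {p w : H} (hp : p ∈ C) (hw : w ∈ C) :
    IsBoundedUnder (· ≤ ·) (𝓝[>] 0) fun t : ℝ => f (t • w + (1 - t) • p) w := by
  set γ : ℝ → H := fun t => t • w + (1 - t) • p
  have hγC : ∀ t ∈ Set.Icc (0 : ℝ) 1, γ t ∈ C := fun t ht =>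
    hC hw hp ht.1 (sub_nonneg.2 ht.2) (add_sub_cancel _ _)
  -- `f (γ t) w ≤ - f w (γ t)`, and the convex function `f w` is bounded below on the segment
  refine ⟨max (f w w) (f w p) - 2 * f w (γ (1 / 2)), eventually_map.2 ?_⟩
  filter_upwards [Ioo_mem_nhdsGT one_pos] with t ht
  have htC := hγC t (Set.Ioo_subset_Icc_self ht)
  have ht' : 1 - t ∈ Set.Icc (0 : ℝ) 1 := ⟨by linarith [ht.2], by linarith [ht.1]⟩
  have hmid : γ (1 / 2) = (1 / 2 : ℝ) • γ t + (1 / 2 : ℝ) • γ (1 - t) := by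
    simp only [γ]; module
  have hmidle := (hconv w hw).2 htC (hγC (1 - t) ht')
    (by norm_num : (0 : ℝ) ≤ 1 / 2) (by norm_num : (0 : ℝ) ≤ 1 / 2) (by norm_num)
  rw [← hmid, smul_eq_mul, smul_eq_mul] at hmidle
  have hend := (hconv w hw).le_on_segment hw hp
    ⟨1 - t, 1 - (1 - t), ht'.1, sub_nonneg.2 ht'.2, add_sub_cancel _ _, rfl⟩
  linarith [hmono (γ t) htC w hw]

/-- Minty's lemma for the bifunction `(x, y) ↦ f x y + ⟪v, y - x⟫`. -/
lemma le_add_inner_of_le_inner (hC : Convex ℝ C) (hA1 : ∀ x ∈ C, f x x = 0)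
    (hmono : ∀ x ∈ C, ∀ y ∈ C, f x y + f y x ≤ 0)
    (hA3 : ∀ x ∈ C, ∀ y ∈ C, ∀ z ∈ C,
      limsup (fun t : ℝ => f (t • z + (1 - t) • x) y) (𝓝[>] 0) ≤ f x y)
    (hconv : ∀ x ∈ C, ConvexOn ℝ C (f x)) {p : H} (hp : p ∈ C) (v : H)
    (h : ∀ w ∈ C, f w p ≤ ⟪v, w - p⟫) {w : H} (hw : w ∈ C) :
    0 ≤ f p w + ⟪v, w - p⟫ := by
  set I := ⟪v, w - p⟫
  set γ : ℝ → H := fun t => t • w + (1 - t) • p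
  have hlower : ∀ t ∈ Set.Ioo (0 : ℝ) 1, -((1 - t) * I) ≤ f (γ t) w := by
    intro t ht
    have htC : γ t ∈ C := hC hw hp ht.1.le (sub_nonneg.2 ht.2.le) (add_sub_cancel _ _)
    -- convexity of `f (γ t)` and (A1): `0 ≤ t f (γ t) w + (1 - t) f (γ t) p`
    have hcvx := (hconv (γ t) htC).2 hw hp ht.1.le (sub_nonneg.2 ht.2.le) (add_sub_cancel _ _)
    rw [hA1 (γ t) htC, smul_eq_mul, smul_eq_mul] at hcvx
    have hγp : f (γ t) p ≤ t * I := by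
      have hsub : γ t - p = t • (w - p) := by simp only [γ]; module
      simpa only [hsub, real_inner_smul_right] using h (γ t) htC
    have hprod : 0 ≤ t * (f (γ t) w + (1 - t) * I) := by
      nlinarith [mul_le_mul_of_nonneg_left hγp (sub_nonneg.2 ht.2.le)]
    linarith [(mul_nonneg_iff_of_pos_left ht.1).1 hprod]
  have hlim : Tendsto (fun t : ℝ => -((1 - t) * I)) (𝓝[>] 0) (𝓝 (-I)) := by
    have : Continuous fun t : ℝ => -((1 - t) * I) := by fun_prop
    simpa using (this.tendsto 0).mono_left nhdsWithin_le_nhds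
  -- the upper bound is needed: the `limsup` of a real function unbounded above is junk
  have hI : -I ≤ f p w := calc
    -I = limsup (fun t : ℝ => -((1 - t) * I)) (𝓝[>] 0) := hlim.limsup_eq.symm
    _ ≤ limsup (fun t => f (γ t) w) (𝓝[>] 0) :=
      limsup_le_limsup (eventually_of_mem (Ioo_mem_nhdsGT one_pos) hlower)
        hlim.isCoboundedUnder_le
        (isBoundedUnder_le_segment_of_monotone_of_convexOn hC hmono hconv hp hw)
    _ ≤ f p w := hA3 p hp w hw w hw
  linarith

lemma IsGEPSolution.of_tendsto_isGEPResolvent (hC : Convex ℝ C) (hA1 : ∀ x ∈ C, f x x = 0)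
    (hmono : ∀ x ∈ C, ∀ y ∈ C, f x y + f y x ≤ 0)
    (hA3 : ∀ x ∈ C, ∀ y ∈ C, ∀ z ∈ C,
      limsup (fun t : ℝ => f (t • z + (1 - t) • x) y) (𝓝[>] 0) ≤ f x y)
    (hconv : ∀ x ∈ C, ConvexOn ℝ C (f x)) (hlsc : ∀ x ∈ C, LowerSemicontinuousOn (f x) C)
    {A : H → H} {α : ℝ} (hA : InverseStronglyMonotoneOn A C α) (hα : 0 < α) {r : ℕ → ℝ} {d : ℝ}
    (hd : 0 < d) (hr : ∀ n, d ≤ r n) {x y : ℕ → H} {p : H}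
    (hy : ∀ n, IsGEPResolvent f A C (r n) (x n) (y n)) (hxC : ∀ n, x n ∈ C)
    (hxp : Tendsto x atTop (𝓝 p)) (hyx : Tendsto (fun n => ‖y n - x n‖) atTop (𝓝 0))
    (hpC : p ∈ C) : IsGEPSolution f A C p := by
  have hyp : Tendsto y atTop (𝓝 p) :=
    hxp.congr_dist (by simpa [dist_eq_norm, norm_sub_rev] using hyx)
  have hAx : Tendsto (fun n => A (x n)) atTop (𝓝 (A p)) :=
    ((hA.continuousOn hα) p hpC).tendsto.comp
      (tendsto_nhdsWithin_iff.2 ⟨hxp, Eventually.of_forall hxC⟩)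
  exact ⟨hpC, fun w hw => le_add_inner_of_le_inner hC hA1 hmono hA3 hconv hpC (A p)
    (le_inner_of_tendsto_isGEPResolvent hd hr hmono hlsc hy hyp hyx hAx hpC) hw⟩

end Equilibrium

end Operators

section Asymptotic

variable {E : Type*} [NormedAddCommGroup E]

def AsymptoticallyNonexpansiveOn (S : E → E) (C : Set E) (k : ℕ → ℝ) : Prop :=
  ∀ n, 1 ≤ n → ∀ x ∈ C, ∀ y ∈ C, ‖S^[n] x - S^[n] y‖ ≤ k n * ‖x - y‖

lemma AsymptoticallyNonexpansiveOn.norm_iterate_sub_le {S : E → E} {C : Set E} {k : ℕ → ℝ}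
    (hS : AsymptoticallyNonexpansiveOn S C k) (hk : ∀ n, 1 ≤ k n) {u : E} (hu : u ∈ C)
    (hfix : S u = u) (n : ℕ) {x : E} (hx : x ∈ C) : ‖S^[n] x - u‖ ≤ k n * ‖x - u‖ := by
  rcases Nat.eq_zero_or_pos n with rfl | hn
  · simpa using le_mul_of_one_le_left (norm_nonneg _) (hk 0)
  · simpa only [Function.iterate_fixed hfix] using hS n hn x hx u hu

lemma AsymptoticallyNonexpansiveOn.apply_eq_of_tendsto {S : E → E} {C : Set E} {k : ℕ → ℝ}
    (hS : AsymptoticallyNonexpansiveOn S C k) (hSC : Set.MapsTo S C C)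
    (hk : Tendsto k atTop (𝓝 1)) {u : ℕ → E} {p : E} (huC : ∀ n, u n ∈ C) (hpC : p ∈ C)
    (hu : Tendsto u atTop (𝓝 p)) (hSu : Tendsto (fun n => S^[n] (u n)) atTop (𝓝 p)) :
    S p = p := by
  -- `S (Sⁿ uₙ) = Sⁿ⁺¹ uₙ` is within `kₙ₊₁ ‖uₙ₊₁ - uₙ‖` of `Sⁿ⁺¹ uₙ₊₁ → p`
  have hshift : Tendsto (fun n => ‖S^[n + 1] (u (n + 1)) - S^[n + 1] (u n)‖) atTop (𝓝 0) := by
    refine squeeze_zero (fun n => norm_nonneg _)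
      (fun n => hS (n + 1) n.succ_pos _ (huC _) _ (huC _)) ?_
    simpa using ((hk.comp (tendsto_add_atTop_nat 1)).mul
      ((hu.comp (tendsto_add_atTop_nat 1)).sub hu).norm)
  have hto_p : Tendsto (fun n => S (S^[n] (u n))) atTop (𝓝 p) :=
    (hSu.comp (tendsto_add_atTop_nat 1)).congr_dist <| by
      simpa only [dist_eq_norm, Function.comp_apply, Function.iterate_succ_apply'] using hshift
  have hto_Sp : Tendsto (fun n => S (S^[n] (u n))) atTop (𝓝 (S p)) := by
    rw [tendsto_iff_norm_sub_tendsto_zero]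
    refine squeeze_zero (fun n => norm_nonneg _) (fun n => ?_)
      (by simpa using (tendsto_iff_norm_sub_tendsto_zero.1 hSu).const_mul (k 1))
    simpa using hS 1 le_rfl _ (hSC.iterate n (huC n)) p hpC
  exact tendsto_nhds_unique hto_Sp hto_p

end Asymptotic

section Sequences

lemma tendsto_zero_of_one_sub_mul_le {a X Y : ℕ → ℝ} (ha : limsup a atTop < 1)
    (ha_bdd : IsBoundedUnder (· ≤ ·) atTop a) (hX : ∀ n, 0 ≤ X n)
    (hXY : ∀ n, (1 - a n) * X n ≤ Y n) (hY : Tendsto Y atTop (𝓝 0)) :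
    Tendsto X atTop (𝓝 0) := by
  obtain ⟨q, hq, hq1⟩ := exists_between ha
  refine squeeze_zero' (Eventually.of_forall hX) ?_ (by simpa using hY.const_mul (1 - q)⁻¹)
  filter_upwards [eventually_lt_of_limsup_lt hq ha_bdd] with n hn
  rw [← div_eq_inv_mul, le_div_iff₀ (sub_pos.2 hq1)]
  nlinarith [hX n, hXY n]

variable {E : Type*} [NormedAddCommGroup E] {a : ℕ → ℝ} {x : ℕ → E} {p : E}

lemma Filter.Tendsto.of_norm_sub_sq_tendsto_zero {u v : ℕ → E} (hv : Tendsto v atTop (𝓝 p))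
    (h : Tendsto (fun n => ‖u n - v n‖ ^ 2) atTop (𝓝 0)) : Tendsto u atTop (𝓝 p) := by
  refine hv.congr_dist ?_
  simpa [dist_eq_norm, norm_sub_rev, Real.sqrt_sq (norm_nonneg _)] using h.sqrt

lemma Filter.Tendsto.of_norm_sub_succ_sq_le {z : ℕ → E} {ε : ℕ → ℝ}
    (hx : Tendsto x atTop (𝓝 p)) (hε : Tendsto ε atTop (𝓝 0))
    (h : ∀ n, ‖z n - x (n + 1)‖ ^ 2 ≤ ‖x n - x (n + 1)‖ ^ 2 + ε n) : Tendsto z atTop (𝓝 p) := by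
  have hsucc := hx.comp (tendsto_add_atTop_nat 1)
  refine hsucc.of_norm_sub_sq_tendsto_zero (squeeze_zero (fun n => sq_nonneg _) h ?_)
  simpa using ((hx.sub hsucc).norm.pow 2).add hε

lemma tendsto_of_norm_smul_add_one_sub_smul_sub_le [NormedSpace ℝ E]
    (ha : limsup a atTop < 1) (ha_bdd : IsBoundedUnder (· ≤ ·) atTop a) {t w : ℕ → E}
    (hx : Tendsto x atTop (𝓝 p)) (hw : Tendsto w atTop (𝓝 p))
    (h : ∀ n, ‖a n • x n + (1 - a n) • t n - x n‖ ≤ ‖w n - x n‖) : Tendsto t atTop (𝓝 p) := by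
  have hXY : ∀ n, (1 - a n) * ‖t n - x n‖ ≤ ‖w n - x n‖ := fun n => by
    have hsplit : a n • x n + (1 - a n) • t n - x n = (1 - a n) • (t n - x n) := by module
    have hn := h n
    rw [hsplit, norm_smul] at hn
    exact (mul_le_mul_of_nonneg_right (Real.le_norm_self _) (norm_nonneg _)).trans hn
  refine hx.congr_dist ?_
  simpa [dist_eq_norm, norm_sub_rev] using tendsto_zero_of_one_sub_mul_le ha ha_bdd
    (fun n => norm_nonneg _) hXY (by simpa using (hw.sub hx).norm)

lemma tendsto_of_norm_sub_sq_le_mul_gap (ha : limsup a atTop < 1)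
    (ha_bdd : IsBoundedUnder (· ≤ ·) atTop a) {k : ℕ → ℝ} (hk : Tendsto k atTop (𝓝 1))
    {y z : ℕ → E} {u : E} {K : ℝ} (hx : Tendsto x atTop (𝓝 p)) (hz : Tendsto z atTop (𝓝 p))
    (hgap : ∀ n, ‖y n - u‖ ^ 2 ≤ ‖x n - u‖ ^ 2)
    (hstep : ∀ n, ‖z n - u‖ ^ 2
      ≤ k n ^ 2 * ‖x n - u‖ ^ 2 - (1 - a n) * (‖x n - u‖ ^ 2 - ‖y n - u‖ ^ 2))
    (hdisp : ∀ n, ‖x n - y n‖ ^ 2 ≤ K * (‖x n - u‖ ^ 2 - ‖y n - u‖ ^ 2)) :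
    Tendsto y atTop (𝓝 p) := by
  have hY : Tendsto (fun n => k n ^ 2 * ‖x n - u‖ ^ 2 - ‖z n - u‖ ^ 2) atTop (𝓝 0) := by
    simpa using ((hk.pow 2).mul ((hx.sub_const u).norm.pow 2)).sub ((hz.sub_const u).norm.pow 2)
  have hgap_lim := tendsto_zero_of_one_sub_mul_le ha ha_bdd (fun n => sub_nonneg.2 (hgap n))
    (fun n => by linarith [hstep n]) hY
  refine hx.of_norm_sub_sq_tendsto_zero (squeeze_zero (fun n => sq_nonneg _) (fun n => ?_)
    (by simpa using hgap_lim.const_mul K))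
  rw [norm_sub_rev]
  exact hdisp n

end Sequences

theorem corollary34_strong_convergence_general
    {H : Type*} [NormedAddCommGroup H] [InnerProductSpace ℝ H] [CompleteSpace H]
    (C : Set H) (hCcl : IsClosed C) (hCcv : Convex ℝ C)
    (N M : ℕ)
    -- the bifunctions fᵢ satisfy (A1)-(A4)
    (f : Fin N → H → H → ℝ)
    (hfA1 : ∀ i, ∀ x ∈ C, f i x x = 0)
    (hfA2 : ∀ i, ∀ x ∈ C, ∀ y ∈ C, f i x y + f i y x ≤ 0)
    (hfA3 : ∀ i, ∀ x ∈ C, ∀ y ∈ C, ∀ z ∈ C,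
      Filter.limsup (fun t : ℝ => f i (t • z + (1 - t) • x) y) (nhdsWithin 0 (Set.Ioi 0))
        ≤ f i x y)
    (hfA4conv : ∀ i, ∀ x ∈ C, ConvexOn ℝ C (f i x))
    (hfA4lsc : ∀ i, ∀ x ∈ C, LowerSemicontinuousOn (f i x) C)
    -- the operators Aᵢ are α-inverse strongly monotone on C
    (A : Fin N → H → H) (α : ℝ) (hα : 0 < α)
    (hism : ∀ i, ∀ x ∈ C, ∀ y ∈ C, α * ‖A i x - A i y‖ ^ 2 ≤ ⟪A i x - A i y, x - y⟫)
    -- the mappings Sⱼ : C → C are asymptotically nonexpansive with the same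
    -- sequence {kₙ} ⊆ [1,∞), kₙ → 1
    (S : Fin M → H → H) (hS : ∀ j, Set.MapsTo (S j) C C)
    (k : ℕ → ℝ) (hk1 : ∀ n, 1 ≤ k n)
    (hklim : Filter.Tendsto k Filter.atTop (nhds 1))
    (hasym : ∀ j, ∀ n, 1 ≤ n → ∀ x ∈ C, ∀ y ∈ C,
      ‖(S j)^[n] x - (S j)^[n] y‖ ≤ k n * ‖x - y‖)
    -- the solution set F is nonempty and bounded by ω
    (F : Set H)
    (hF : F = {v ∈ C | ∀ i, ∀ y ∈ C, 0 ≤ f i v y + ⟪A i v, y - v⟫} ∩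
      {v | ∀ j, S j v = v})
    (hFne : F.Nonempty) (ω : ℝ) (hFb : ∀ v ∈ F, ‖v‖ ≤ ω)
    -- control parameters
    (a : ℕ → ℝ) (ha0 : ∀ n, 0 < a n) (ha1 : ∀ n, a n < 1)
    (halimsup : Filter.limsup a Filter.atTop < 1)
    (r : ℕ → ℝ) (d e : ℝ) (hd : 0 < d) (he : e < 2 * α) (hr : ∀ n, d ≤ r n ∧ r n ≤ e)
    -- the iterates of Algorithm 1
    (x : ℕ → H) (y : ℕ → Fin N → H) (z : ℕ → Fin M → H)
    (iN : ℕ → Fin N) (jM : ℕ → Fin M) (ybar zbar : ℕ → H) (Cset : ℕ → Set H)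
    (hx0 : x 0 ∈ C) (hC0 : Cset 0 = C)
    -- (i) yₙⁱ solves the regularized generalized equilibrium problem
    (hy : ∀ n i, y n i ∈ C ∧ ∀ w ∈ C,
      0 ≤ f i (y n i) w + ⟪A i (x n), w - y n i⟫ +
        (1 / r n) * ⟪w - y n i, y n i - x n⟫)
    -- (ii) iₙ maximizes ‖yₙⁱ - xₙ‖ and ȳₙ = yₙ^{iₙ}
    (hiN : ∀ n i, ‖y n i - x n‖ ≤ ‖y n (iN n) - x n‖)
    (hybar : ∀ n, ybar n = y n (iN n))
    -- (iii) zₙʲ = αₙ xₙ + (1-αₙ) Sⱼⁿ ȳₙ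
    (hz : ∀ n j, z n j = a n • x n + (1 - a n) • (S j)^[n] (ybar n))
    -- (iv) jₙ maximizes ‖zₙʲ - xₙ‖ and z̄ₙ = zₙ^{jₙ}
    (hjM : ∀ n j, ‖z n j - x n‖ ≤ ‖z n (jM n) - x n‖)
    (hzbar : ∀ n, zbar n = z n (jM n))
    -- (v) Cₙ₊₁ = {v ∈ Cₙ : ‖z̄ₙ - v‖² ≤ ‖xₙ - v‖² + εₙ}, εₙ = (kₙ² - 1)(‖xₙ‖ + ω)²
    (hCset : ∀ n, Cset (n + 1) =
      {v ∈ Cset n | ‖zbar n - v‖ ^ 2 ≤ ‖x n - v‖ ^ 2 + (k n ^ 2 - 1) * (‖x n‖ + ω) ^ 2})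
    -- (vi) xₙ₊₁ = P_{Cₙ₊₁} x₀
    (hxproj : ∀ n, IsProjOn (Cset (n + 1)) (x 0) (x (n + 1))) :
    ∃ p, IsProjOn F (x 0) p ∧ Filter.Tendsto x Filter.atTop (nhds p) := by
  obtain ⟨u₀, hu₀⟩ := hFne
  have hFsol : ∀ u ∈ F, u ∈ C ∧ (∀ i, IsGEPSolution (f i) (A i) C u) ∧ ∀ j, S j u = u := by
    intro u hu; rw [hF] at hu; exact ⟨hu.1.1, fun i => ⟨hu.1.1, hu.1.2 i⟩, hu.2⟩
  have hSasym : ∀ j, AsymptoticallyNonexpansiveOn (S j) C k := hasym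
  have hproj : ∀ n, IsProjOn (Cset n) (x 0) (x n)
    | 0 => ⟨hC0 ▸ hx0, fun v _ => by simp⟩
    | n + 1 => hxproj n
  have hxC : ∀ n, x n ∈ C := fun n => hC0 ▸ antitone_of_succ_eq_sep hCset n.zero_le (hproj n).1
  have hybar_res : ∀ n, IsGEPResolvent (f (iN n)) (A (iN n)) C (r n) (x n) (ybar n) :=
    fun n => hybar n ▸ hy n (iN n)
  have hquasi : ∀ u ∈ F, ∀ n, ‖ybar n - u‖ ^ 2 ≤ ‖x n - u‖ ^ 2 := fun u hu n =>
    (hybar_res n).norm_sub_sq_le_norm_sub_sq ((hFsol u hu).2.1 _) (hfA2 _) (hism _) (hxC n)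
      (hd.trans_le (hr n).1) (by linarith [(hr n).2])
  have hstep : ∀ u ∈ F, ∀ n, ‖zbar n - u‖ ^ 2
      ≤ k n ^ 2 * ‖x n - u‖ ^ 2 - (1 - a n) * (‖x n - u‖ ^ 2 - ‖ybar n - u‖ ^ 2) := by
    intro u hu n
    rw [hzbar, hz]
    exact norm_smul_add_one_sub_smul_sub_sq_le (ha0 n).le (ha1 n).le (hk1 n)
      ((hSasym _).norm_iterate_sub_le hk1 (hFsol u hu).1 ((hFsol u hu).2.2 _) n (hybar_res n).1)
      (hquasi u hu n)
  have hFsub : ∀ n, F ⊆ Cset n :=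
    subset_of_succ_eq_sep hCset (hC0 ▸ fun u hu => (hFsol u hu).1) fun n u hu => by
      nlinarith [hstep u hu n, sq_mul_norm_sub_sq_le (x := x n) (hk1 n) (hFb u hu),
        mul_nonneg (sub_nonneg.2 (ha1 n).le) (sub_nonneg.2 (hquasi u hu n))]
  obtain ⟨p, hxp, hpmin⟩ := exists_tendsto_of_isProjOn_antitone (antitone_of_succ_eq_sep hCset)
    (convex_of_succ_eq_sep hCset (hC0 ▸ hCcv)
      fun n => convex_setOf_norm_sub_sq_le_norm_sub_sq_add _ _ _)
    hproj fun n => hFsub n hu₀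
  have hpC : p ∈ C := hCcl.mem_of_tendsto hxp (Eventually.of_forall hxC)
  have hzbar_p : Tendsto zbar atTop (𝓝 p) := by
    refine hxp.of_norm_sub_succ_sq_le (ε := fun n => (k n ^ 2 - 1) * (‖x n‖ + ω) ^ 2) ?_
      fun n => (hCset n ▸ (hxproj n).1).2
    simpa using ((hklim.pow 2).sub_const 1).mul ((hxp.norm.add_const ω).pow 2)
  have ha_bdd : IsBoundedUnder (· ≤ ·) atTop a := isBoundedUnder_of ⟨1, fun n => (ha1 n).le⟩
  have hybar_p : Tendsto ybar atTop (𝓝 p) :=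
    tendsto_of_norm_sub_sq_le_mul_gap halimsup ha_bdd hklim hxp hzbar_p (hquasi u₀ hu₀)
      (hstep u₀ hu₀) fun n => (hybar_res n).norm_sub_sq_le_mul ((hFsol u₀ hu₀).2.1 _) (hfA2 _)
        (hism _) (hxC n) hd (hr n).1 (hr n).2 he
  have hfix : ∀ j, S j p = p := fun j =>
    (hSasym j).apply_eq_of_tendsto (hS j) hklim (fun n => (hybar_res n).1) hpC hybar_p <|
      tendsto_of_norm_smul_add_one_sub_smul_sub_le halimsup ha_bdd hxp hzbar_p fun n => by
        rw [← hz, hzbar]; exact hjM n j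
  have hyx : ∀ i, Tendsto (fun n => ‖y n i - x n‖) atTop (𝓝 0) := fun i =>
    squeeze_zero (fun n => norm_nonneg _)
      (fun n => (hybar n).symm ▸ hiN n i : ∀ n, ‖y n i - x n‖ ≤ ‖ybar n - x n‖)
      (by simpa using (hybar_p.sub hxp).norm)
  have hsol : ∀ i, IsGEPSolution (f i) (A i) C p := fun i =>
    .of_tendsto_isGEPResolvent hCcv (hfA1 i) (hfA2 i) (hfA3 i) (hfA4conv i) (hfA4lsc i) (hism i)
      hα hd (fun n => (hr n).1) (fun n => hy n i) hxC hxp (hyx i) hpC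
  exact ⟨p, ⟨hF ▸ ⟨⟨hpC, fun i => (hsol i).2⟩, hfix⟩, fun v hv => hpmin v fun n => hFsub n hv⟩,
    hxp⟩

/-- **Corollary 3.4.** Parallel hybrid algorithm for a finite family of
generalized equilibrium problems and asymptotically nonexpansive mappings: `{xₙ}`
converges strongly to `P_F x₀`. -/
theorem corollary34_strong_convergence
    {H : Type*} [NormedAddCommGroup H] [InnerProductSpace ℝ H] [CompleteSpace H]
    (C : Set H) (hCne : C.Nonempty) (hCcl : IsClosed C) (hCcv : Convex ℝ C)
    (N M : ℕ) (hN : 0 < N) (hM : 0 < M)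
    -- the bifunctions fᵢ satisfy (A1)-(A4)
    (f : Fin N → H → H → ℝ)
    (hfA1 : ∀ i, ∀ x ∈ C, f i x x = 0)
    (hfA2 : ∀ i, ∀ x ∈ C, ∀ y ∈ C, f i x y + f i y x ≤ 0)
    (hfA3 : ∀ i, ∀ x ∈ C, ∀ y ∈ C, ∀ z ∈ C,
      Filter.limsup (fun t : ℝ => f i (t • z + (1 - t) • x) y) (nhdsWithin 0 (Set.Ioi 0))
        ≤ f i x y)
    (hfA4conv : ∀ i, ∀ x ∈ C, ConvexOn ℝ C (f i x))
    (hfA4lsc : ∀ i, ∀ x ∈ C, LowerSemicontinuousOn (f i x) C)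
    -- the operators Aᵢ are α-inverse strongly monotone on C
    (A : Fin N → H → H) (α : ℝ) (hα : 0 < α)
    (hism : ∀ i, ∀ x ∈ C, ∀ y ∈ C, α * ‖A i x - A i y‖ ^ 2 ≤ ⟪A i x - A i y, x - y⟫)
    -- the mappings Sⱼ : C → C are asymptotically nonexpansive with the same
    -- sequence {kₙ} ⊆ [1,∞), kₙ → 1
    (S : Fin M → H → H) (hS : ∀ j, Set.MapsTo (S j) C C)
    (k : ℕ → ℝ) (hk1 : ∀ n, 1 ≤ k n)
    (hklim : Filter.Tendsto k Filter.atTop (nhds 1))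
    (hasym : ∀ j, ∀ n, 1 ≤ n → ∀ x ∈ C, ∀ y ∈ C,
      ‖(S j)^[n] x - (S j)^[n] y‖ ≤ k n * ‖x - y‖)
    -- the solution set F is nonempty and bounded by ω
    (F : Set H)
    (hF : F = {v ∈ C | ∀ i, ∀ y ∈ C, 0 ≤ f i v y + ⟪A i v, y - v⟫} ∩
      {v | ∀ j, S j v = v})
    (hFne : F.Nonempty) (ω : ℝ) (hω : 0 < ω) (hFb : ∀ v ∈ F, ‖v‖ ≤ ω)
    -- control parameters
    (a : ℕ → ℝ) (ha0 : ∀ n, 0 < a n) (ha1 : ∀ n, a n < 1)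
    (halimsup : Filter.limsup a Filter.atTop < 1)
    (r : ℕ → ℝ) (d e : ℝ) (hd : 0 < d) (he : e < 2 * α) (hr : ∀ n, d ≤ r n ∧ r n ≤ e)
    -- the iterates of Algorithm 1
    (x : ℕ → H) (y : ℕ → Fin N → H) (z : ℕ → Fin M → H)
    (iN : ℕ → Fin N) (jM : ℕ → Fin M) (ybar zbar : ℕ → H) (Cset : ℕ → Set H)
    (hx0 : x 0 ∈ C) (hC0 : Cset 0 = C)
    -- (i) yₙⁱ solves the regularized generalized equilibrium problem
    (hy : ∀ n i, y n i ∈ C ∧ ∀ w ∈ C,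
      0 ≤ f i (y n i) w + ⟪A i (x n), w - y n i⟫ +
        (1 / r n) * ⟪w - y n i, y n i - x n⟫)
    -- (ii) iₙ maximizes ‖yₙⁱ - xₙ‖ and ȳₙ = yₙ^{iₙ}
    (hiN : ∀ n i, ‖y n i - x n‖ ≤ ‖y n (iN n) - x n‖)
    (hybar : ∀ n, ybar n = y n (iN n))
    -- (iii) zₙʲ = αₙ xₙ + (1-αₙ) Sⱼⁿ ȳₙ
    (hz : ∀ n j, z n j = a n • x n + (1 - a n) • (S j)^[n] (ybar n))
    -- (iv) jₙ maximizes ‖zₙʲ - xₙ‖ and z̄ₙ = zₙ^{jₙ}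
    (hjM : ∀ n j, ‖z n j - x n‖ ≤ ‖z n (jM n) - x n‖)
    (hzbar : ∀ n, zbar n = z n (jM n))
    -- (v) Cₙ₊₁ = {v ∈ Cₙ : ‖z̄ₙ - v‖² ≤ ‖xₙ - v‖² + εₙ}, εₙ = (kₙ² - 1)(‖xₙ‖ + ω)²
    (hCset : ∀ n, Cset (n + 1) =
      {v ∈ Cset n | ‖zbar n - v‖ ^ 2 ≤ ‖x n - v‖ ^ 2 + (k n ^ 2 - 1) * (‖x n‖ + ω) ^ 2})
    -- (vi) xₙ₊₁ = P_{Cₙ₊₁} x₀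
    (hxproj : ∀ n, IsProjOn (Cset (n + 1)) (x 0) (x (n + 1))) :
    ∃ p, IsProjOn F (x 0) p ∧ Filter.Tendsto x Filter.atTop (nhds p) :=
  corollary34_strong_convergence_general C hCcl hCcv N M f hfA1 hfA2 hfA3 hfA4conv hfA4lsc A α hα
    hism S hS k hk1 hklim hasym F hF hFne ω hFb a ha0 ha1 halimsup r d e hd he hr x y z iN jM ybar
    zbar Cset hx0 hC0 hy hiN hybar hz hjM hzbar hCset hxproj
end

section
/- Let H be a real Hilbert space, C ⊆ H nonempty convex, and S : C → C an asymptotically κ-strictly pseudocontractive mapping with sequence {k_n} ⊆ [1,∞). Let n ≥ 1, β ∈ [κ, 1), y ∈ C, and let u ∈ C be a fixed point of S. Then ‖β y + (1−β) S^n y − u‖² ≤ (β + (1−β)k_n)‖y − u‖² − (β − κ)(1−β)‖y − S^n y‖² ≤ k_n‖y − u‖². -/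
open scoped RealInnerProductSpace

lemma combo_norm_sq {H : Type*} [NormedAddCommGroup H] [InnerProductSpace ℝ H]
    (a b : H) (β : ℝ) :
    ‖β • a + (1 - β) • b‖ ^ 2
      = β * ‖a‖ ^ 2 + (1 - β) * ‖b‖ ^ 2 - β * (1 - β) * ‖a - b‖ ^ 2 := by
  simp only [← real_inner_self_eq_norm_sq, inner_add_add_self, inner_sub_sub_self,
    real_inner_smul_left, real_inner_smul_right]
  ring

/-- If `S` is asymptotically `κ`-strictly pseudocontractive with sequence
`{kₙ} ⊆ [1,∞)`, `n ≥ 1`, `β ∈ [κ,1)`, `y ∈ C` and `u` is a fixed point of `S`, then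
`‖β y + (1-β) Sⁿ y - u‖² ≤ (β + (1-β)kₙ)‖y - u‖² - (β - κ)(1-β)‖y - Sⁿ y‖² ≤ kₙ‖y - u‖²`. -/
theorem convex_combination_asymptotically_pseudocontractive_estimate
    {H : Type*} [NormedAddCommGroup H] [InnerProductSpace ℝ H]
    (C : Set H) (hCne : C.Nonempty) (hCcv : Convex ℝ C)
    (S : H → H) (hS : Set.MapsTo S C C)
    (κ : ℝ) (hκ0 : 0 ≤ κ) (hκ1 : κ < 1)
    (k : ℕ → ℝ) (hk1 : ∀ n, 1 ≤ k n)
    (hasym : ∀ n, 1 ≤ n → ∀ x ∈ C, ∀ y ∈ C,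
      ‖S^[n] x - S^[n] y‖ ^ 2
        ≤ k n * ‖x - y‖ ^ 2 + κ * ‖(x - S^[n] x) - (y - S^[n] y)‖ ^ 2)
    (n : ℕ) (hn : 1 ≤ n) (β : ℝ) (hβκ : κ ≤ β) (hβ1 : β < 1)
    (y : H) (hy : y ∈ C) (u : H) (hu : u ∈ C) (hfix : S u = u) :
    ‖β • y + (1 - β) • S^[n] y - u‖ ^ 2
        ≤ (β + (1 - β) * k n) * ‖y - u‖ ^ 2 - (β - κ) * (1 - β) * ‖y - S^[n] y‖ ^ 2 ∧
      (β + (1 - β) * k n) * ‖y - u‖ ^ 2 - (β - κ) * (1 - β) * ‖y - S^[n] y‖ ^ 2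
        ≤ k n * ‖y - u‖ ^ 2 := by
  have hSu : S^[n] u = u := Function.iterate_fixed hfix n
  have hmain := hasym n hn y hy u hu
  rw [hSu] at hmain
  have hrew : β • y + (1 - β) • S^[n] y - u = β • (y - u) + (1 - β) • (S^[n] y - u) := by
    module
  have hid := combo_norm_sq (y - u) (S^[n] y - u) β
  have hdiff : (y - u) - (S^[n] y - u) = y - S^[n] y := by abel
  rw [hdiff] at hid
  have hmain' : ‖S^[n] y - u‖ ^ 2 ≤ k n * ‖y - u‖ ^ 2 + κ * ‖y - S^[n] y‖ ^ 2 := by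
    have : (y - S^[n] y) - (u - u) = y - S^[n] y := by abel
    simpa [this] using hmain
  have hβnn : (0:ℝ) ≤ 1 - β := by linarith
  constructor
  · rw [hrew, hid]
    nlinarith [hmain', sq_nonneg ‖y - S^[n] y‖]
  · nlinarith [mul_nonneg (mul_nonneg (by linarith : (0:ℝ) ≤ β - κ) hβnn) (sq_nonneg ‖y - S^[n] y‖),
      mul_nonneg (mul_nonneg (by linarith : (0:ℝ) ≤ β) (by linarith [hk1 n] : (0:ℝ) ≤ k n - 1)) (sq_nonneg ‖y - u‖)]
end

section
/- Let 1 < c < 2 and define S : [−1,1] → [−1,1] by S(x) = x for −1 ≤ x < 0 and S(x) = x − c x² for 0 ≤ x ≤ 1. Then the fixed point set of S is exactly [−1, 0], and S is not nonexpansive: for every real ε with 2/c − 1 < ε < 1 one has |S(ε) − S(1)| = (1 − ε)|c(1 + ε) − 1| > |1 − ε|. -/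
/-- For `1 < c < 2`, the mapping `S(x) = x` for `-1 ≤ x < 0`,
`S(x) = x - c x²` for `0 ≤ x ≤ 1`, has fixed point set `[-1, 0]` and is not nonexpansive:
for every `ε` with `2/c - 1 < ε < 1`,
`|S(ε) - S(1)| = (1 - ε)|c(1 + ε) - 1| > |1 - ε|`. -/
theorem example_mapping_fixed_points_and_not_nonexpansive
    (c : ℝ) (hc1 : 1 < c) (hc2 : c < 2)
    (S : ℝ → ℝ) (hS : ∀ x : ℝ, S x = if x < 0 then x else x - c * x ^ 2) :
    ({x ∈ Set.Icc (-1 : ℝ) 1 | S x = x} = Set.Icc (-1 : ℝ) 0) ∧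
      ∀ ε : ℝ, 2 / c - 1 < ε → ε < 1 →
        |S ε - S 1| = (1 - ε) * |c * (1 + ε) - 1| ∧ |1 - ε| < |S ε - S 1| := by
  have hc0 : (0:ℝ) < c := by linarith
  constructor
  · ext x
    simp only [Set.mem_setOf_eq, Set.mem_Icc, hS x]
    constructor
    · rintro ⟨⟨h1, h2⟩, hfix⟩
      refine ⟨h1, ?_⟩
      by_cases hx : x < 0
      · linarith
      · simp only [if_neg hx] at hfix
        push_neg at hx
        have : c * x ^ 2 = 0 := by linarith
        have hx2 : x ^ 2 = 0 := by
          rcases mul_eq_zero.mp this with h | h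
          · linarith
          · exact h
        have := pow_eq_zero_iff (n := 2) (by norm_num) |>.mp hx2
        linarith
    · rintro ⟨h1, h2⟩
      refine ⟨⟨h1, by linarith⟩, ?_⟩
      by_cases hx : x < 0
      · simp [hx]
      · have : x = 0 := by push_neg at hx; linarith
        simp [this]
  · intro ε hε1 hε2
    have hεpos : 0 < ε := by
      have : (0:ℝ) < 2 / c - 1 := by
        rw [sub_pos, lt_div_iff₀ hc0]; linarith
      linarith
    have hSε : S ε = ε - c * ε ^ 2 := by rw [hS]; simp [not_lt.mpr hεpos.le]
    have hS1 : S 1 = 1 - c := by rw [hS]; norm_num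
    have hkey : c * (1 + ε) - 1 > 1 := by
      have : 2 / c < 1 + ε := by linarith
      have := (div_lt_iff₀ hc0).mp this
      linarith
    have heq : S ε - S 1 = (1 - ε) * (c * (1 + ε) - 1) := by
      rw [hSε, hS1]; ring
    have h1ε : (0:ℝ) < 1 - ε := by linarith
    constructor
    · rw [heq, abs_mul, abs_of_pos h1ε]
    · rw [heq, abs_of_pos h1ε, abs_of_pos (by positivity : (0:ℝ) < (1-ε)*(c*(1+ε)-1))]
      nlinarith
end
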